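/- arXiv:0710.3681 — 9 statements merged into one kernel-verified Lean document; each statement's English description precedes it below -/
import Mathlib

section
/- For fixed real numbers a > b > 0, the function u(x) = ln((e^{ax} - 1)/(e^{bx} - 1)), extended continuously at x = 0 by u(0) = ln(a/b), is strictly convex on the real line. -/
/-!
Differentiating `c ↦ log (exp (c * x) - 1)` gives, also at `x = 0`,
`u x = (a - b) * x / 2 + ∫ s in b..a, mulCoth (s * x / 2) / s` with `mulCoth y = y * coth y`,
so `u` is strictly convex once `mulCoth` is. As `mulCoth` is even, its derivative is odd, and for
`y > 0` that derivative `(cosh y * sinh y - y) / sinh y ^ 2` is positive with derivative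
`2 * (y * cosh y - sinh y) / sinh y ^ 3 > 0`; hence it is strictly increasing on all of `ℝ`.
-/

open Real Set

theorem Function.Even.deriv_odd {𝕜 F : Type*} [NontriviallyNormedField 𝕜] [NormedAddCommGroup F]
    [NormedSpace 𝕜 F] {f : 𝕜 → F} (hf : f.Even) : (deriv f).Odd := fun x => by
  simpa [hf.eq] using deriv_comp_neg f (-x)

theorem strictConvexOn_intervalIntegral {E : Type*} [AddCommGroup E] [Module ℝ E] {D : Set E}
    {f : ℝ → E → ℝ} {a b : ℝ} (hab : a < b)
    (hcont : ∀ x ∈ D, ContinuousOn (fun s => f s x) (Icc a b))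
    (hconv : ∀ s ∈ Icc a b, StrictConvexOn ℝ D (f s)) :
    StrictConvexOn ℝ D (fun x => ∫ s in a..b, f s x) := by
  have hconv_a := hconv a (left_mem_Icc.2 hab.le)
  refine ⟨hconv_a.1, fun x hx y hy hxy t u ht hu htu => ?_⟩
  have hmem : t • x + u • y ∈ D := hconv_a.1 hx hy ht.le hu.le htu
  have hcomb : ContinuousOn (fun s => t * f s x + u * f s y) (Icc a b) :=
    ((hcont x hx).const_smul t).add ((hcont y hy).const_smul u)
  have hlt : ∫ s in a..b, f s (t • x + u • y) < ∫ s in a..b, t * f s x + u * f s y :=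
    intervalIntegral.integral_lt_integral_of_continuousOn_of_le_of_exists_lt hab
      (hcont _ hmem) hcomb
      (fun s hs => ((hconv s (Ioc_subset_Icc_self hs)).2 hx hy hxy ht hu htu).le)
      ⟨a, left_mem_Icc.2 hab.le, hconv_a.2 hx hy hxy ht hu htu⟩
  have hint {z : E} (hz : z ∈ D) : IntervalIntegrable (fun s => f s z) MeasureTheory.volume a b :=
    (hcont z hz).intervalIntegrable_of_Icc hab.le
  rwa [intervalIntegral.integral_add ((hint hx).const_mul t) ((hint hy).const_mul u),
    intervalIntegral.integral_const_mul, intervalIntegral.integral_const_mul] at hlt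

lemma sinh_lt_mul_cosh {y : ℝ} (hy : 0 < y) : sinh y < y * cosh y := by
  have hderiv (z : ℝ) : HasDerivAt (fun z => z * cosh z - sinh z) (z * sinh z) z :=
    ((hasDerivAt_id' z).fun_mul (hasDerivAt_cosh z)).fun_sub (hasDerivAt_sinh z)
      |>.congr_deriv (by ring)
  have hmono : StrictMonoOn (fun z => z * cosh z - sinh z) (Ici 0) := by
    refine strictMonoOn_of_deriv_pos (convex_Ici 0) (by fun_prop) fun z hz => ?_
    rw [interior_Ici, mem_Ioi] at hz
    rw [(hderiv z).deriv]
    exact mul_pos hz (sinh_pos_iff.2 hz)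
  simpa using hmono self_mem_Ici hy.le hy

lemma strictMonoOn_cosh_mul_sinh_sub_div_sinh_sq :
    StrictMonoOn (fun y => (cosh y * sinh y - y) / sinh y ^ 2) (Ioi 0) := by
  have hderiv {y : ℝ} (hy : y ≠ 0) : HasDerivAt (fun y => (cosh y * sinh y - y) / sinh y ^ 2)
      (2 * (y * cosh y - sinh y) / sinh y ^ 3) y := by
    have hs : sinh y ≠ 0 := sinh_ne_zero.2 hy
    have h := (((hasDerivAt_cosh y).fun_mul (hasDerivAt_sinh y)).fun_sub (hasDerivAt_id' y)).fun_div
      ((hasDerivAt_sinh y).fun_pow 2) (pow_ne_zero 2 hs)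
    refine h.congr_deriv ?_
    norm_num
    field_simp
    linear_combination (-sinh y) * cosh_sq_sub_sinh_sq y
  refine strictMonoOn_of_deriv_pos (convex_Ioi 0)
    (fun y hy => (hderiv (ne_of_gt hy)).continuousAt.continuousWithinAt) fun y hy => ?_
  rw [interior_Ioi, mem_Ioi] at hy
  rw [(hderiv hy.ne').deriv]
  have := sub_pos.2 (sinh_lt_mul_cosh hy)
  have := sinh_pos_iff.2 hy
  positivity

noncomputable def mulCoth (y : ℝ) : ℝ := if y = 0 then 1 else y * cosh y / sinh y

lemma mulCoth_of_ne_zero {y : ℝ} (hy : y ≠ 0) : mulCoth y = y * cosh y / sinh y := if_neg hy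

lemma mulCoth_even : mulCoth.Even := fun y => by
  rcases eq_or_ne y 0 with rfl | hy
  · simp
  · rw [mulCoth_of_ne_zero hy, mulCoth_of_ne_zero (neg_ne_zero.2 hy), cosh_neg, sinh_neg, neg_mul,
      neg_div_neg_eq]

lemma mulCoth_eq_cosh_div_dslope : mulCoth = fun y => cosh y / dslope sinh 0 y := by
  ext y
  rcases eq_or_ne y 0 with rfl | hy
  · simp [mulCoth, (hasDerivAt_sinh 0).deriv]
  · rw [mulCoth_of_ne_zero hy, dslope_of_ne _ hy, slope_def_field, sinh_zero, sub_zero, sub_zero,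
      div_div_eq_mul_div, mul_comm]

lemma continuous_mulCoth : Continuous mulCoth := by
  have hdslope : Continuous (dslope sinh 0) := continuousOn_univ.1 <|
    (continuousOn_dslope Filter.univ_mem).2 ⟨continuous_sinh.continuousOn, differentiable_sinh 0⟩
  rw [mulCoth_eq_cosh_div_dslope]
  refine continuous_cosh.div hdslope fun y => ?_
  rcases eq_or_ne y 0 with rfl | hy
  · simp [(hasDerivAt_sinh 0).deriv]
  · simp [dslope_of_ne _ hy, slope_def_field, hy]

lemma hasDerivAt_mulCoth {y : ℝ} (hy : y ≠ 0) :
    HasDerivAt mulCoth ((cosh y * sinh y - y) / sinh y ^ 2) y := by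
  have hs : sinh y ≠ 0 := sinh_ne_zero.2 hy
  have h := ((hasDerivAt_id' y).fun_mul (hasDerivAt_cosh y)).fun_div (hasDerivAt_sinh y) hs
  refine (h.congr_deriv ?_).congr_of_eventuallyEq ?_
  · field_simp
    linear_combination (-y) * cosh_sq_sub_sinh_sq y
  · filter_upwards [isOpen_compl_singleton.mem_nhds hy] with z hz
    exact mulCoth_of_ne_zero hz

/- At `y = 0` both sides vanish: the left one because `deriv mulCoth` is odd, the right one
because `0 / 0 = 0`. -/
lemma deriv_mulCoth (y : ℝ) : deriv mulCoth y = (cosh y * sinh y - y) / sinh y ^ 2 := by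
  rcases eq_or_ne y 0 with rfl | hy
  · simpa using mulCoth_even.deriv_odd.map_zero
  · exact (hasDerivAt_mulCoth hy).deriv

lemma strictMono_deriv_mulCoth : StrictMono (deriv mulCoth) := by
  refine strictMono_of_odd_strictMonoOn_nonneg mulCoth_even.deriv_odd fun x hx y hy hxy => ?_
  rw [deriv_mulCoth, deriv_mulCoth]
  rcases (mem_Ici.1 hx).eq_or_lt with rfl | hx
  · have hsinh := sinh_pos_iff.2 hxy
    have : y < cosh y * sinh y :=
      (self_lt_sinh_iff.2 hxy).trans_le (le_mul_of_one_le_left hsinh.le (one_le_cosh y))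
    rw [sinh_zero, mul_zero, sub_zero, zero_div]
    positivity
  · exact strictMonoOn_cosh_mul_sinh_sub_div_sinh_sq hx (hx.trans hxy) hxy

lemma strictConvexOn_mulCoth : StrictConvexOn ℝ univ mulCoth :=
  (strictMono_deriv_mulCoth.strictMonoOn _).strictConvexOn_of_deriv convex_univ
    continuous_mulCoth.continuousOn

lemma strictConvexOn_mulCoth_mul_div {s : ℝ} (hs : 0 < s) :
    StrictConvexOn ℝ univ (fun x => mulCoth (s * x / 2) / s) := by
  refine ⟨convex_univ, fun x _ y _ hxy t u ht hu htu => ?_⟩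
  have hne : s * x / 2 ≠ s * y / 2 := by
    intro h
    apply hxy
    field_simp at h
    exact h
  have h := strictConvexOn_mulCoth.2 (mem_univ _) (mem_univ _) hne ht hu htu
  simp only [smul_eq_mul] at h ⊢
  calc mulCoth (s * (t * x + u * y) / 2) / s
      = mulCoth (t * (s * x / 2) + u * (s * y / 2)) / s := by ring_nf
    _ < (t * mulCoth (s * x / 2) + u * mulCoth (s * y / 2)) / s := div_lt_div_of_pos_right h hs
    _ = t * (mulCoth (s * x / 2) / s) + u * (mulCoth (s * y / 2) / s) := by ring

lemma continuousOn_mulCoth_mul_div (x : ℝ) :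
    ContinuousOn (fun s => mulCoth (s * x / 2) / s) {0}ᶜ :=
  (continuous_mulCoth.comp (by fun_prop)).continuousOn.div continuousOn_id fun _ hs => hs

lemma log_exp_sub_one {y : ℝ} (hy : y ≠ 0) :
    log (exp y - 1) = y / 2 + log 2 + log (sinh (y / 2)) := by
  have h : exp y - 1 = 2 * exp (y / 2) * sinh (y / 2) := by
    rw [sinh_eq, exp_neg, ← add_halves y, exp_add, add_halves]
    field_simp
  rw [h, log_mul (by positivity) (sinh_ne_zero.2 (by simpa using hy)),
    log_mul two_ne_zero (exp_ne_zero _), log_exp]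
  ring

lemma hasDerivAt_log_sinh_mul {x s : ℝ} (hx : x ≠ 0) (hs : s ≠ 0) :
    HasDerivAt (fun r => log (sinh (r * x / 2))) (mulCoth (s * x / 2) / s) s := by
  have hsx : s * x / 2 ≠ 0 := by positivity
  have h := ((hasDerivAt_mul_const x).div_const 2 |>.sinh).log (sinh_ne_zero.2 hsx)
  refine h.congr_deriv ?_
  rw [mulCoth_of_ne_zero hsx]
  field_simp

lemma integral_mulCoth_mul_div {a b x : ℝ} (ha : 0 < a) (hb : 0 < b) (hx : x ≠ 0) :
    ∫ s in b..a, mulCoth (s * x / 2) / s = log (sinh (a * x / 2)) - log (sinh (b * x / 2)) := by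
  have hne {s : ℝ} (hs : s ∈ uIcc b a) : s ≠ 0 := fun h => notMem_uIcc_of_lt hb ha (h ▸ hs)
  refine intervalIntegral.integral_eq_sub_of_hasDerivAt
    (fun s hs => hasDerivAt_log_sinh_mul hx (hne hs)) ?_
  exact ((continuousOn_mulCoth_mul_div x).mono fun s hs => hne hs).intervalIntegrable

lemma log_exp_sub_one_div_eq_integral {a b : ℝ} (ha : 0 < a) (hb : 0 < b) (x : ℝ) :
    (if x = 0 then log (a / b) else log ((exp (a * x) - 1) / (exp (b * x) - 1))) =
      (a - b) * x / 2 + ∫ s in b..a, mulCoth (s * x / 2) / s := by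
  rcases eq_or_ne x 0 with rfl | hx
  · have h : (fun s : ℝ => mulCoth (s * 0 / 2) / s) = fun s => 1 / s := by simp [mulCoth]
    rw [if_pos rfl, h, integral_one_div (notMem_uIcc_of_lt hb ha)]
    ring
  · have hne {c : ℝ} (hc : 0 < c) : exp (c * x) - 1 ≠ 0 := by simp [sub_eq_zero, hc.ne', hx]
    rw [if_neg hx, integral_mulCoth_mul_div ha hb hx, log_div (hne ha) (hne hb),
      log_exp_sub_one (by positivity), log_exp_sub_one (by positivity)]
    ring

theorem stmt0 (a b : ℝ) (hab : a > b) (hb : b > 0) :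
    StrictConvexOn ℝ Set.univ (fun x : ℝ =>
      if x = 0 then Real.log (a / b)
      else Real.log ((Real.exp (a * x) - 1) / (Real.exp (b * x) - 1))) := by
  have hlinear : ConvexOn ℝ univ (fun x : ℝ => (a - b) * x / 2) :=
    ⟨convex_univ, fun _ _ _ _ _ _ _ _ _ => le_of_eq (by simp only [smul_eq_mul]; ring)⟩
  have hintegral : StrictConvexOn ℝ univ (fun x => ∫ s in b..a, mulCoth (s * x / 2) / s) :=
    strictConvexOn_intervalIntegral hab
      (fun x _ => (continuousOn_mulCoth_mul_div x).mono fun s hs => (hb.trans_le hs.1).ne')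
      fun s hs => strictConvexOn_mulCoth_mul_div (hb.trans_le hs.1)
  exact (hlinear.add_strictConvexOn hintegral).congr fun x _ =>
    (log_exp_sub_one_div_eq_integral (hb.trans hab) hb x).symm
end

section
/- For real numbers a > b ≥ c > d > 0 with ad - bc > 0, the function g(x) = ln((a^x - b^x)/(c^x - d^x)), extended continuously at 0, is strictly convex on the real line. -/
noncomputable def logMean (x y : ℝ) : ℝ := (x - y) / (Real.log x - Real.log y)

/-!
With `α = (log a - log b) / 2`, `β = (log c - log d) / 2` we have
`a ^ x - b ^ x = 2 (ab) ^ (x / 2) sinh (α x)`, and likewise for `c, d`, so the function is a linear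
function plus `log (sinh (α x) / sinh (β x))`; the hypothesis `ad > bc` says exactly `β < α`.
Away from `0` the second derivative of the latter is `β² / sinh² (β x) - α² / sinh² (α x) > 0`,
because `sinh u / u` increases on `u > 0` (convexity of `sinh`). Across `0` one uses that the
function is even, so its derivative is odd, and positive for `x > 0` by convexity on `[0, ∞)`
together with `sinh (α x) / sinh (β x) > α / β`.
-/

open Real Set Filter Topology

lemma strictConvexOn_sinh : StrictConvexOn ℝ (Ici 0) sinh := by
  refine strictConvexOn_of_deriv2_pos (convex_Ici 0) continuous_sinh.continuousOn fun x hx => ?_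
  rw [interior_Ici] at hx
  simpa [Real.deriv_sinh, Real.deriv_cosh] using hx

lemma sinh_div_self_lt_sinh_div_self {u v : ℝ} (hu : 0 < u) (huv : u < v) :
    sinh u / u < sinh v / v := by
  simpa using strictConvexOn_sinh.secant_strict_mono (a := 0) self_mem_Ici hu.le (hu.trans huv).le
    hu.ne' (hu.trans huv).ne' huv

lemma hasDerivAt_log_sinh {u : ℝ} (hu : u ≠ 0) :
    HasDerivAt (fun u => log (sinh u)) (cosh u / sinh u) u :=
  (hasDerivAt_sinh u).log (sinh_ne_zero.mpr hu)

lemma hasDerivAt_cosh_div_sinh {u : ℝ} (hu : u ≠ 0) :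
    HasDerivAt (fun u => cosh u / sinh u) (-1 / sinh u ^ 2) u := by
  refine ((hasDerivAt_cosh u).div (hasDerivAt_sinh u) (sinh_ne_zero.mpr hu)).congr_deriv ?_
  rw [← cosh_sq_sub_sinh_sq u]
  ring

noncomputable def logSinhRatio (α β t : ℝ) : ℝ :=
  if t = 0 then log (α / β) else log (sinh (α * t) / sinh (β * t))

lemma logSinhRatio_neg (α β t : ℝ) : logSinhRatio α β (-t) = logSinhRatio α β t := by
  simp [logSinhRatio, neg_div_neg_eq]

lemma deriv_logSinhRatio_neg (α β t : ℝ) :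
    deriv (logSinhRatio α β) (-t) = -deriv (logSinhRatio α β) t := by
  rw [← neg_neg (deriv (logSinhRatio α β) (-t)), ← deriv_comp_neg]
  simp [logSinhRatio_neg]

lemma logSinhRatio_of_ne_zero {α β t : ℝ} (hα : α ≠ 0) (hβ : β ≠ 0) (ht : t ≠ 0) :
    logSinhRatio α β t = log (sinh (α * t)) - log (sinh (β * t)) := by
  rw [logSinhRatio, if_neg ht, log_div (sinh_ne_zero.mpr (mul_ne_zero hα ht))
    (sinh_ne_zero.mpr (mul_ne_zero hβ ht))]

lemma hasDerivAt_logSinhRatio {α β t : ℝ} (hα : α ≠ 0) (hβ : β ≠ 0) (ht : t ≠ 0) :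
    HasDerivAt (logSinhRatio α β)
      (α * (cosh (α * t) / sinh (α * t)) - β * (cosh (β * t) / sinh (β * t))) t := by
  have hA := (hasDerivAt_log_sinh (mul_ne_zero hα ht)).comp t ((hasDerivAt_id t).const_mul α)
  have hB := (hasDerivAt_log_sinh (mul_ne_zero hβ ht)).comp t ((hasDerivAt_id t).const_mul β)
  refine ((hA.sub hB).congr_deriv (by simp only [mul_one]; ring)).congr_of_eventuallyEq ?_
  filter_upwards [isOpen_ne.mem_nhds ht] with s hs
  exact logSinhRatio_of_ne_zero hα hβ hs

lemma continuous_logSinhRatio {α β : ℝ} (hα : α ≠ 0) (hβ : β ≠ 0) :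
    Continuous (logSinhRatio α β) := by
  refine continuous_iff_continuousAt.mpr fun t => ?_
  rcases eq_or_ne t 0 with rfl | ht
  · have hslope (γ : ℝ) : Tendsto (slope (fun t => sinh (γ * t)) 0) (𝓝[≠] 0) (𝓝 γ) := by
      have h := (hasDerivAt_sinh (γ * 0)).comp 0 ((hasDerivAt_id 0).const_mul γ)
      exact (h.congr_deriv (by simp)).tendsto_slope
    have hlim := ((hslope α).div (hslope β) hβ).log (div_ne_zero hα hβ)
    have h0 : logSinhRatio α β 0 = log (α / β) := if_pos rfl
    rw [← continuousWithinAt_compl_self, ContinuousWithinAt, h0]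
    refine hlim.congr' ?_
    filter_upwards [self_mem_nhdsWithin] with s (hs : s ≠ 0)
    simp [slope_def_field, logSinhRatio, hs, div_div_div_cancel_right₀]
  · exact (hasDerivAt_logSinhRatio hα hβ ht).continuousAt

section

variable {α β : ℝ} (hβ : 0 < β) (hβα : β < α)
include hβ hβα

lemma sinh_mul_div_lt_sinh_mul_div {t : ℝ} (ht : 0 < t) :
    sinh (β * t) / β < sinh (α * t) / α := by
  have h := sinh_div_self_lt_sinh_div_self (mul_pos hβ ht) (mul_lt_mul_of_pos_right hβα ht)
  calc sinh (β * t) / β = sinh (β * t) / (β * t) * t := by field_simp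
    _ < sinh (α * t) / (α * t) * t := mul_lt_mul_of_pos_right h ht
    _ = sinh (α * t) / α := by field_simp

lemma logSinhRatio_zero_lt {t : ℝ} (ht : 0 < t) : logSinhRatio α β 0 < logSinhRatio α β t := by
  have hα : 0 < α := hβ.trans hβα
  have h := sinh_mul_div_lt_sinh_mul_div hβ hβα ht
  rw [logSinhRatio, logSinhRatio, if_pos rfl, if_neg ht.ne']
  refine log_lt_log (div_pos hα hβ) ?_
  rw [div_lt_div_iff₀ hβ (sinh_pos_iff.mpr (mul_pos hβ ht))]
  rw [div_lt_div_iff₀ hβ hα] at h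
  linarith

lemma strictMonoOn_deriv_logSinhRatio : StrictMonoOn (deriv (logSinhRatio α β)) (Ioi 0) := by
  have hα : 0 < α := hβ.trans hβα
  let S' : ℝ → ℝ := fun t => α * (cosh (α * t) / sinh (α * t)) - β * (cosh (β * t) / sinh (β * t))
  have hS' : EqOn S' (deriv (logSinhRatio α β)) (Ioi 0) := fun t ht =>
    (hasDerivAt_logSinhRatio hα.ne' hβ.ne' (ne_of_gt ht)).deriv.symm
  have hS'' {t : ℝ} (ht : 0 < t) :
      HasDerivAt S' (β ^ 2 / sinh (β * t) ^ 2 - α ^ 2 / sinh (α * t) ^ 2) t := by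
    have hA := ((hasDerivAt_cosh_div_sinh (mul_pos hα ht).ne').comp t
      ((hasDerivAt_id t).const_mul α)).const_mul α
    have hB := ((hasDerivAt_cosh_div_sinh (mul_pos hβ ht).ne').comp t
      ((hasDerivAt_id t).const_mul β)).const_mul β
    exact (hA.sub hB).congr_deriv (by simp only [mul_one]; ring)
  refine StrictMonoOn.congr ?_ hS'
  refine strictMonoOn_of_deriv_pos (convex_Ioi 0)
    (fun t ht => (hS'' ht).continuousAt.continuousWithinAt) fun t ht => ?_
  rw [interior_Ioi] at ht
  rw [(hS'' ht).deriv, sub_pos, ← div_pow, ← div_pow]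
  have h := sinh_mul_div_lt_sinh_mul_div hβ hβα ht
  have h' : α / sinh (α * t) < β / sinh (β * t) := by
    rw [← one_div_div (sinh (α * t)) α, ← one_div_div (sinh (β * t)) β]
    exact one_div_lt_one_div_of_lt (div_pos (sinh_pos_iff.mpr (mul_pos hβ ht)) hβ) h
  exact pow_lt_pow_left₀ h' (div_pos hα (sinh_pos_iff.mpr (mul_pos hα ht))).le two_ne_zero

lemma deriv_logSinhRatio_pos {t : ℝ} (ht : 0 < t) : 0 < deriv (logSinhRatio α β) t := by
  have hα : 0 < α := hβ.trans hβα
  have hconvex : StrictConvexOn ℝ (Ici 0) (logSinhRatio α β) :=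
    StrictMonoOn.strictConvexOn_of_deriv (convex_Ici 0)
      (continuous_logSinhRatio hα.ne' hβ.ne').continuousOn
      (interior_Ici (a := (0 : ℝ)) ▸ strictMonoOn_deriv_logSinhRatio hβ hβα)
  have hslope := hconvex.slope_lt_deriv self_mem_Ici ht.le ht
    (hasDerivAt_logSinhRatio hα.ne' hβ.ne' ht.ne').differentiableAt
  refine lt_trans ?_ hslope
  rw [slope_def_field]
  exact div_pos (sub_pos.mpr (logSinhRatio_zero_lt hβ hβα ht)) (by linarith)

lemma strictMono_deriv_logSinhRatio : StrictMono (deriv (logSinhRatio α β)) := by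
  refine strictMono_of_odd_strictMonoOn_nonneg (deriv_logSinhRatio_neg α β) ?_
  -- `logSinhRatio α β` is even, so this holds whether or not it is differentiable at `0`.
  have hzero : deriv (logSinhRatio α β) 0 = 0 := by
    linarith [neg_zero (G := ℝ) ▸ deriv_logSinhRatio_neg α β 0]
  rintro s (hs : 0 ≤ s) t (ht : 0 ≤ t) hst
  rcases hs.eq_or_lt with rfl | hs
  · rw [hzero]
    exact deriv_logSinhRatio_pos hβ hβα hst
  · exact strictMonoOn_deriv_logSinhRatio hβ hβα hs (hs.trans hst) hst

theorem strictConvexOn_logSinhRatio : StrictConvexOn ℝ univ (logSinhRatio α β) :=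
  (strictMono_deriv_logSinhRatio hβ hβα).strictConvexOn_univ_of_deriv
    (continuous_logSinhRatio (hβ.trans hβα).ne' hβ.ne')

end

lemma rpow_sub_rpow_eq_mul_sinh {a b : ℝ} (ha : 0 < a) (hb : 0 < b) (x : ℝ) :
    a ^ x - b ^ x = 2 * exp ((log a + log b) / 2 * x) * sinh ((log a - log b) / 2 * x) := by
  have hax : log a * x = (log a + log b) / 2 * x + (log a - log b) / 2 * x := by ring
  have hbx : log b * x = (log a + log b) / 2 * x + -((log a - log b) / 2 * x) := by ring
  rw [rpow_def_of_pos ha, rpow_def_of_pos hb, hax, hbx, exp_add, exp_add, sinh_eq]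
  ring

lemma log_sub_log_ne_zero {a b : ℝ} (ha : 0 < a) (hb : 0 < b) (hab : a ≠ b) :
    log a - log b ≠ 0 :=
  sub_ne_zero.mpr fun h => hab (log_injOn_pos ha hb h)

section

variable {a b c d : ℝ} (ha : 0 < a) (hb : 0 < b) (hc : 0 < c) (hd : 0 < d) (hab : a ≠ b)
  (hcd : c ≠ d)
include ha hb hc hd hab hcd

lemma log_rpow_sub_rpow_div_rpow_sub_rpow {x : ℝ} (hx : x ≠ 0) :
    log ((a ^ x - b ^ x) / (c ^ x - d ^ x)) =
      ((log a + log b) / 2 - (log c + log d) / 2) * x +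
        logSinhRatio ((log a - log b) / 2) ((log c - log d) / 2) x := by
  have hα := mul_ne_zero (div_ne_zero (log_sub_log_ne_zero ha hb hab) two_ne_zero) hx
  have hβ := mul_ne_zero (div_ne_zero (log_sub_log_ne_zero hc hd hcd) two_ne_zero) hx
  have hsplit : 2 * exp ((log a + log b) / 2 * x) * sinh ((log a - log b) / 2 * x) /
      (2 * exp ((log c + log d) / 2 * x) * sinh ((log c - log d) / 2 * x)) =
      exp (((log a + log b) / 2 - (log c + log d) / 2) * x) *
        (sinh ((log a - log b) / 2 * x) / sinh ((log c - log d) / 2 * x)) := by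
    rw [sub_mul, exp_sub]
    field_simp
  rw [rpow_sub_rpow_eq_mul_sinh ha hb, rpow_sub_rpow_eq_mul_sinh hc hd, hsplit,
    log_mul (exp_ne_zero _) (div_ne_zero (sinh_ne_zero.mpr hα) (sinh_ne_zero.mpr hβ)), log_exp,
    logSinhRatio, if_neg hx]

lemma log_div_mul_logMean_div_logMean :
    log ((a - b) / (c - d) * (logMean c d / logMean a b)) =
      logSinhRatio ((log a - log b) / 2) ((log c - log d) / 2) 0 := by
  have hα := log_sub_log_ne_zero ha hb hab
  have hβ := log_sub_log_ne_zero hc hd hcd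
  have hab' := sub_ne_zero.mpr hab
  have hcd' := sub_ne_zero.mpr hcd
  rw [logSinhRatio, if_pos rfl, logMean, logMean]
  congr 1
  field_simp

end

theorem stmt1 (a b c d : ℝ) (hab : a > b) (hbc : b ≥ c) (hcd : c > d) (hd : d > 0)
    (h : a * d - b * c > 0) :
    StrictConvexOn ℝ Set.univ (fun x : ℝ =>
      if x = 0 then Real.log (((a - b) / (c - d)) * (logMean c d / logMean a b))
      else Real.log ((a ^ x - b ^ x) / (c ^ x - d ^ x))) := by
  have hc : 0 < c := hd.trans hcd
  have hb : 0 < b := hc.trans_le hbc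
  have ha : 0 < a := hb.trans hab
  have hβ : 0 < (log c - log d) / 2 := by linarith [log_lt_log hd hcd]
  have hβα : (log c - log d) / 2 < (log a - log b) / 2 := by
    have hlog := log_lt_log (mul_pos hb hc) (by linarith : b * c < a * d)
    rw [log_mul hb.ne' hc.ne', log_mul ha.ne' hd.ne'] at hlog
    linarith
  refine (((LinearMap.mulLeft ℝ ((log a + log b) / 2 - (log c + log d) / 2)).convexOn
    convex_univ).add_strictConvexOn (strictConvexOn_logSinhRatio hβ hβα)).congr fun x _ => ?_
  simp only [Pi.add_apply, LinearMap.mulLeft_apply]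
  split_ifs with hx
  · rw [hx, mul_zero, zero_add, log_div_mul_logMean_div_logMean ha hb hc hd hab.ne' hcd.ne']
  · exact (log_rpow_sub_rpow_div_rpow_sub_rpow ha hb hc hd hab.ne' hcd.ne' hx).symm
end

section
/- For real numbers a > b ≥ c > 0, the function f(x) = (e^{ax} - e^{bx})/(e^{cx} - 1), extended continuously at x = 0 by f(0) = (a - b)/c, is strictly convex on the real line. -/
/-!
Away from the origin `f = h_a - h_b` with `h_t x = e^{tx} / (e^{cx} - 1)`, and
`h_t'' x = e^{tx} (((t - c) e^{cx} - t)^2 + c^2 e^{cx}) / (e^{cx} - 1)^3`.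
For fixed `x ≠ 0` this is strictly increasing in `t ≥ c`: its `t`-derivative has the right sign
because `tanh (u/2) < u/2` for `u > 0`. Hence `f'' = h_a'' - h_b'' > 0` off the origin.
At the origin, `f` is the quotient of the difference quotients at `0` of `e^{ax} - e^{bx}` and
`e^{cx} - 1`, so it is real analytic on `ℝ`; thus `f'` is continuous, strictly increasing on both
half-lines, hence on `ℝ`.
-/

open Real Set Filter Topology

theorem AnalyticAt.dslope {𝕜 E : Type*} [NontriviallyNormedField 𝕜] [NormedAddCommGroup E]
    [NormedSpace 𝕜 E] {f : 𝕜 → E} {a b : 𝕜} (ha : AnalyticAt 𝕜 f a) (hb : AnalyticAt 𝕜 f b) :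
    AnalyticAt 𝕜 (dslope f a) b := by
  rcases eq_or_ne b a with rfl | hba
  · obtain ⟨p, hp⟩ := ha
    exact ⟨_, hp.has_fpower_series_dslope_fslope⟩
  have hinv : AnalyticAt 𝕜 (fun x => (x - a)⁻¹) b :=
    (analyticAt_id.sub analyticAt_const).inv (sub_ne_zero.mpr hba)
  refine ((hinv.smul (hb.sub (analyticAt_const (v := f a)))).congr ?_).congr
    (dslope_eventuallyEq_slope_of_ne f hba).symm
  exact .of_eq (funext fun x => by simp [slope_fun_def])

theorem strictMono_of_deriv_pos_of_ne {g : ℝ → ℝ} (p : ℝ) (hg : Continuous g)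
    (hg' : ∀ x ≠ p, 0 < deriv g x) : StrictMono g := by
  refine StrictMonoOn.Iic_union_Ici (a := p) ?_ ?_
  · refine strictMonoOn_of_deriv_pos (convex_Iic p) hg.continuousOn fun x hx => hg' x ?_
    rw [interior_Iic] at hx
    exact hx.ne
  · refine strictMonoOn_of_deriv_pos (convex_Ici p) hg.continuousOn fun x hx => hg' x ?_
    rw [interior_Ici] at hx
    exact hx.ne'

theorem StrictMono.mul_apply_pos {g : ℝ → ℝ} (hg : StrictMono g) (h0 : g 0 = 0) {u : ℝ}
    (hu : u ≠ 0) : 0 < u * g u := by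
  rcases hu.lt_or_gt with hu | hu
  · exact mul_pos_of_neg_of_neg hu (h0 ▸ hg hu)
  · exact mul_pos hu (h0 ▸ hg hu)

lemma hasDerivAt_exp_mul (t x : ℝ) : HasDerivAt (fun x => exp (t * x)) (t * exp (t * x)) x := by
  simpa [mul_comm] using ((hasDerivAt_id x).const_mul t).exp

lemma exp_mul_sub_one_ne_zero {c x : ℝ} (hc : c ≠ 0) (hx : x ≠ 0) : exp (c * x) - 1 ≠ 0 :=
  sub_ne_zero.mpr fun h => mul_ne_zero hc hx (exp_eq_one_iff _ |>.mp h)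

lemma mul_exp_mul_sub_one_pos {c x : ℝ} (hc : 0 < c) (hx : x ≠ 0) :
    0 < x * (exp (c * x) - 1) := by
  have hmono : StrictMono fun u => exp (c * u) - 1 := fun u v huv => by
    dsimp only
    gcongr
  exact hmono.mul_apply_pos (by simp) hx

-- For `u > 0` this is `tanh (u / 2) < u / 2`.
lemma strictMono_mul_exp_add_one_sub :
    StrictMono fun u => u * (exp u + 1) - 2 * (exp u - 1) := by
  refine strictMono_of_deriv_pos_of_ne 0 (by fun_prop) fun u hu => ?_
  have hderiv : HasDerivAt (fun u => u * (exp u + 1) - 2 * (exp u - 1))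
      (1 + (u - 1) * exp u) u :=
    (((hasDerivAt_id' u).mul ((hasDerivAt_exp u).add_const 1)).sub
      (((hasDerivAt_exp u).sub_const 1).const_mul 2)).congr_deriv (by ring)
  rw [hderiv.deriv]
  have hlt : -u + 1 < exp (-u) := add_one_lt_exp (neg_ne_zero.mpr hu)
  have hinv : exp (-u) * exp u = 1 := by rw [← exp_add, neg_add_cancel, exp_zero]
  nlinarith [exp_pos u]

section ExpQuot

noncomputable def expQuot (c t x : ℝ) : ℝ := exp (t * x) / (exp (c * x) - 1)

noncomputable def expQuotDeriv (c t x : ℝ) : ℝ :=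
  exp (t * x) * ((t - c) * exp (c * x) - t) / (exp (c * x) - 1) ^ 2

noncomputable def expQuotDeriv2 (c t x : ℝ) : ℝ :=
  exp (t * x) * (((t - c) * exp (c * x) - t) ^ 2 + c ^ 2 * exp (c * x)) / (exp (c * x) - 1) ^ 3

variable {c x : ℝ}

lemma hasDerivAt_expQuot (t : ℝ) (hx : exp (c * x) - 1 ≠ 0) :
    HasDerivAt (expQuot c t) (expQuotDeriv c t x) x := by
  refine ((hasDerivAt_exp_mul t x).div ((hasDerivAt_exp_mul c x).sub_const 1) hx).congr_deriv ?_
  simp only [expQuotDeriv]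
  set C := exp (c * x)
  field_simp
  ring

lemma hasDerivAt_expQuotDeriv (t : ℝ) (hx : exp (c * x) - 1 ≠ 0) :
    HasDerivAt (expQuotDeriv c t) (expQuotDeriv2 c t x) x := by
  have hnum : HasDerivAt (fun x => exp (t * x) * ((t - c) * exp (c * x) - t))
      (t * exp (t * x) * ((t - c) * exp (c * x) - t) + exp (t * x) * ((t - c) * (c * exp (c * x))))
      x :=
    (hasDerivAt_exp_mul t x).mul (((hasDerivAt_exp_mul c x).const_mul (t - c)).sub_const t)
  have hden : HasDerivAt (fun x => (exp (c * x) - 1) ^ 2)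
      (2 * (exp (c * x) - 1) * (c * exp (c * x))) x :=
    (((hasDerivAt_exp_mul c x).sub_const 1).fun_pow 2).congr_deriv (by norm_num)
  refine (hnum.div hden (pow_ne_zero 2 hx)).congr_deriv ?_
  simp only [expQuotDeriv2]
  set C := exp (c * x)
  field_simp
  ring

lemma hasDerivAt_expQuotDeriv2_param (t : ℝ) :
    HasDerivAt (fun t => expQuotDeriv2 c t x)
      (exp (t * x) * (x * ((t - c) * exp (c * x) - t) ^ 2
        + 2 * (exp (c * x) - 1) * ((t - c) * exp (c * x) - t) + c ^ 2 * x * exp (c * x))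
        / (exp (c * x) - 1) ^ 3) t := by
  have hexp : HasDerivAt (fun t => exp (t * x)) (x * exp (t * x)) t := by
    simpa [mul_comm] using ((hasDerivAt_id' t).mul_const x).exp
  have hD : HasDerivAt (fun t => (t - c) * exp (c * x) - t) (exp (c * x) - 1) t :=
    ((((hasDerivAt_id' t).sub_const c).mul_const (exp (c * x))).sub (hasDerivAt_id' t)).congr_deriv
      (by ring)
  refine ((hexp.mul ((hD.fun_pow 2).add_const (c ^ 2 * exp (c * x)))).div_const
    ((exp (c * x) - 1) ^ 3)).congr_deriv ?_
  push_cast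
  ring

lemma mul_expQuotDeriv2_param_numerator_pos {t : ℝ} (hc : 0 < c) (ht : c ≤ t) (hx : x ≠ 0) :
    0 < x * (x * ((t - c) * exp (c * x) - t) ^ 2
      + 2 * (exp (c * x) - 1) * ((t - c) * exp (c * x) - t) + c ^ 2 * x * exp (c * x)) := by
  have hgap := strictMono_mul_exp_add_one_sub.mul_apply_pos (by simp) (mul_ne_zero hc.ne' hx)
  have hC := mul_exp_mul_sub_one_pos hc hx
  have hC1 : c * x + 1 ≤ exp (c * x) := add_one_le_exp _
  set C := exp (c * x)
  have hsplit : x * (x * ((t - c) * C - t) ^ 2 + 2 * (C - 1) * ((t - c) * C - t) + c ^ 2 * x * C)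
      = (t - c) * (x * (C - 1)) * ((t - c) * (x * (C - 1)) + 2 * (C - 1 - c * x))
        + c * x * (c * x * (C + 1) - 2 * (C - 1)) := by ring
  have hfirst : 0 ≤ (t - c) * (x * (C - 1)) * ((t - c) * (x * (C - 1)) + 2 * (C - 1 - c * x)) := by
    have hprod := mul_nonneg (sub_nonneg.mpr ht) hC.le
    exact mul_nonneg hprod (by linarith)
  rw [hsplit]
  exact add_pos_of_nonneg_of_pos hfirst hgap

lemma strictMonoOn_expQuotDeriv2_param (hc : 0 < c) (hx : x ≠ 0) :
    StrictMonoOn (fun t => expQuotDeriv2 c t x) (Ici c) := by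
  refine strictMonoOn_of_deriv_pos (convex_Ici c)
    (fun t _ => (hasDerivAt_expQuotDeriv2_param t).continuousAt.continuousWithinAt) fun t ht => ?_
  rw [interior_Ici] at ht
  rw [(hasDerivAt_expQuotDeriv2_param t).deriv, mul_div_assoc]
  refine mul_pos (exp_pos _) ?_
  have hM := mul_expQuotDeriv2_param_numerator_pos hc ht.le hx
  have hC := mul_exp_mul_sub_one_pos hc hx
  rcases hx.lt_or_gt with hx | hx
  · exact div_pos_of_neg_of_neg (neg_of_mul_pos_right hM hx.le)
      (Odd.pow_neg (by decide) (neg_of_mul_pos_right hC hx.le))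
  · exact div_pos (pos_of_mul_pos_right hM hx.le) (pow_pos (pos_of_mul_pos_right hC hx.le) 3)

end ExpQuot

noncomputable def expSub (a b x : ℝ) : ℝ := exp (a * x) - exp (b * x)

lemma analyticAt_expSub (a b x : ℝ) : AnalyticAt ℝ (expSub a b) x := by
  unfold expSub
  fun_prop

lemma hasDerivAt_expSub (a b x : ℝ) :
    HasDerivAt (expSub a b) (a * exp (a * x) - b * exp (b * x)) x :=
  (hasDerivAt_exp_mul a x).sub (hasDerivAt_exp_mul b x)

lemma dslope_expSub_zero (a b : ℝ) : dslope (expSub a b) 0 0 = a - b := by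
  simp [dslope_same, (hasDerivAt_expSub a b 0).deriv]

lemma dslope_expSub_of_ne (a b : ℝ) {x : ℝ} (hx : x ≠ 0) :
    dslope (expSub a b) 0 x = (exp (a * x) - exp (b * x)) / x := by
  simp [dslope_of_ne _ hx, slope_def_field, expSub]

section ExpDiffQuot

noncomputable def expDiffQuot (a b c x : ℝ) : ℝ :=
  if x = 0 then (a - b) / c else (exp (a * x) - exp (b * x)) / (exp (c * x) - 1)

variable (a b : ℝ) {c x : ℝ}

lemma expDiffQuot_eq_dslope_div :
    expDiffQuot a b c = fun x => dslope (expSub a b) 0 x / dslope (expSub c 0) 0 x := by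
  funext x
  rcases eq_or_ne x 0 with rfl | hx
  · rw [expDiffQuot, if_pos rfl, dslope_expSub_zero, dslope_expSub_zero, sub_zero]
  · rw [expDiffQuot, if_neg hx, dslope_expSub_of_ne _ _ hx, dslope_expSub_of_ne _ _ hx,
      zero_mul, exp_zero, div_div_div_cancel_right₀ hx]

lemma analyticOnNhd_expDiffQuot (hc : c ≠ 0) : AnalyticOnNhd ℝ (expDiffQuot a b c) univ := by
  rw [expDiffQuot_eq_dslope_div]
  intro x _
  refine ((analyticAt_expSub a b 0).dslope (analyticAt_expSub a b x)).div
    ((analyticAt_expSub c 0 0).dslope (analyticAt_expSub c 0 x)) ?_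
  rcases eq_or_ne x 0 with rfl | hx
  · rwa [dslope_expSub_zero, sub_zero]
  · rw [dslope_expSub_of_ne _ _ hx, zero_mul, exp_zero]
    exact div_ne_zero (exp_mul_sub_one_ne_zero hc hx) hx

lemma expDiffQuot_eventuallyEq (hx : x ≠ 0) :
    expDiffQuot a b c =ᶠ[𝓝 x] expQuot c a - expQuot c b := by
  filter_upwards [isOpen_ne.mem_nhds hx] with y hy
  simp [expDiffQuot, expQuot, hy, sub_div]

lemma deriv_deriv_expDiffQuot (hc : c ≠ 0) (hx : x ≠ 0) :
    deriv (deriv (expDiffQuot a b c)) x = expQuotDeriv2 c a x - expQuotDeriv2 c b x := by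
  have hderiv : deriv (expDiffQuot a b c) =ᶠ[𝓝 x] expQuotDeriv c a - expQuotDeriv c b := by
    filter_upwards [isOpen_ne.mem_nhds hx] with y hy
    have hy' := exp_mul_sub_one_ne_zero hc hy
    exact (((hasDerivAt_expQuot a hy').sub (hasDerivAt_expQuot b hy')).congr_of_eventuallyEq
      (expDiffQuot_eventuallyEq a b hy)).deriv
  have hx' := exp_mul_sub_one_ne_zero hc hx
  rw [hderiv.deriv_eq]
  exact ((hasDerivAt_expQuotDeriv a hx').sub (hasDerivAt_expQuotDeriv b hx')).deriv

end ExpDiffQuot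

theorem stmt4 (a b c : ℝ) (hab : a > b) (hbc : b ≥ c) (hc : c > 0) :
    StrictConvexOn ℝ Set.univ (fun x : ℝ =>
      if x = 0 then (a - b) / c
      else (Real.exp (a * x) - Real.exp (b * x)) / (Real.exp (c * x) - 1)) := by
  have hanalytic := analyticOnNhd_expDiffQuot a b hc.ne'
  refine StrictMono.strictConvexOn_univ_of_deriv (f := expDiffQuot a b c) hanalytic.continuous ?_
  refine strictMono_of_deriv_pos_of_ne 0 hanalytic.deriv.continuous fun x hx => ?_
  rw [deriv_deriv_expDiffQuot a b hc.ne' hx, sub_pos]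
  exact strictMonoOn_expQuotDeriv2_param hc hx hbc (hbc.trans hab.le) hab
end

section
/- For real numbers a > b ≥ c > d > 0, the function f(x) = (a^x - b^x)/(c^x - d^x), extended continuously at x = 0, is strictly convex on the real line. -/
/-!
With `a = e^α`, `b = e^β`, `c = e^γ`, `d = e^δ` (so `δ < γ ≤ β < α`) the function is `N/D` with
`N(x) = ∫_β^α e^{sx} ds` and `D(x) = ∫_δ^γ e^{sx} ds`; this form is smooth through `x = 0`.
Writing `Nₖ, Dₖ` for the moments `∫ sᵏ e^{sx} ds`, we get `f'' = G/D³` with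
`N·G = (N₁D - ND₁)² + D²(NN₂ - N₁²) - N²(DD₂ - D₁²)`.
The middle term is nonnegative by Cauchy–Schwarz. The weight of `N` lies right of `γ` and that of
`D` left of it, so `N₁D - ND₁ > N(γD - D₁) ≥ 0`. Finally the exponential weight on `[δ, γ]` has
variance at most the squared distance from its mean to `γ`, `DD₂ - D₁² ≤ (γD - D₁)²`, which an
explicit integration reduces to `t((t - 2)eᵗ + t + 2) ≥ 0`. Hence `G > 0`.
-/

open Set Real intervalIntegral

theorem strictConvexOn_univ_of_hasDerivAt2_pos {f f' f'' : ℝ → ℝ}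
    (hf : ∀ x, HasDerivAt f (f' x) x) (hf' : ∀ x, HasDerivAt f' (f'' x) x) (hf'' : ∀ x, 0 < f'' x) :
    StrictConvexOn ℝ univ f := by
  have hderiv : deriv f = f' := funext fun x => (hf x).deriv
  refine StrictMono.strictConvexOn_univ_of_deriv
    (continuous_iff_continuousAt.2 fun x => (hf x).continuousAt) ?_
  rw [hderiv]
  exact strictMono_of_deriv_pos fun x => (hf' x).deriv ▸ hf'' x

theorem strictConvexOn_univ_div {n n' n'' d d' d'' : ℝ → ℝ}
    (hn : ∀ x, HasDerivAt n (n' x) x) (hn' : ∀ x, HasDerivAt n' (n'' x) x)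
    (hd : ∀ x, HasDerivAt d (d' x) x) (hd' : ∀ x, HasDerivAt d' (d'' x) x) (hd₀ : ∀ x, 0 < d x)
    (hpos : ∀ x, 0 < n'' x * d x ^ 2 - 2 * n' x * d' x * d x + 2 * n x * d' x ^ 2
      - n x * d x * d'' x) :
    StrictConvexOn ℝ univ fun x => n x / d x := by
  refine strictConvexOn_univ_of_hasDerivAt2_pos
    (f' := fun x => (n' x * d x - n x * d' x) / d x ^ 2)
    (f'' := fun x => (n'' x * d x ^ 2 - 2 * n' x * d' x * d x + 2 * n x * d' x ^ 2
      - n x * d x * d'' x) / d x ^ 3)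
    (fun x => (hn x).div (hd x) (hd₀ x).ne') (fun x => ?_)
    (fun x => div_pos (hpos x) (pow_pos (hd₀ x) 3))
  have hx := (hd₀ x).ne'
  exact ((((hn' x).mul (hd x)).sub ((hn x).mul (hd' x))).div ((hd x).pow 2)
    (pow_ne_zero 2 hx)).congr_deriv
    (by simp only [Pi.pow_apply, Pi.sub_apply, Pi.mul_apply]; field_simp; ring)

lemma quotient_second_deriv_numerator_pos {γ n₀ n₁ n₂ d₀ d₁ d₂ : ℝ} (hn₀ : 0 < n₀) (hd₀ : 0 < d₀)
    (hn₁ : γ * n₀ < n₁) (hd₁ : d₁ ≤ γ * d₀) (hn : n₁ ^ 2 ≤ n₀ * n₂)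
    (hd : d₀ * d₂ - d₁ ^ 2 ≤ (γ * d₀ - d₁) ^ 2) :
    0 < n₂ * d₀ ^ 2 - 2 * n₁ * d₁ * d₀ + 2 * n₀ * d₁ ^ 2 - n₀ * d₀ * d₂ := by
  have hlt : n₀ * (γ * d₀ - d₁) < n₁ * d₀ - n₀ * d₁ := by nlinarith
  have hsq : (n₀ * (γ * d₀ - d₁)) ^ 2 < (n₁ * d₀ - n₀ * d₁) ^ 2 :=
    pow_lt_pow_left₀ hlt (mul_nonneg hn₀.le (sub_nonneg.2 hd₁)) two_ne_zero
  refine pos_of_mul_pos_right ?_ hn₀.le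
  have key : n₀ * (n₂ * d₀ ^ 2 - 2 * n₁ * d₁ * d₀ + 2 * n₀ * d₁ ^ 2 - n₀ * d₀ * d₂) =
      (n₁ * d₀ - n₀ * d₁) ^ 2 + d₀ ^ 2 * (n₀ * n₂ - n₁ ^ 2) - n₀ ^ 2 * (d₀ * d₂ - d₁ ^ 2) := by ring
  rw [key]
  nlinarith [mul_le_mul_of_nonneg_left hd (sq_nonneg n₀),
    mul_nonneg (sq_nonneg d₀) (sub_nonneg.2 hn)]

lemma mul_sub_two_mul_exp_add_two_nonneg (t : ℝ) : 0 ≤ t * ((t - 2) * exp t + t + 2) := by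
  set g : ℝ → ℝ := fun u => (u - 2) * exp u + u + 2
  have hg : ∀ u, HasDerivAt g ((u - 1) * exp u + 1) u := fun u =>
    (((((hasDerivAt_id u).sub_const 2).mul (hasDerivAt_exp u)).add (hasDerivAt_id u)).add_const 2
      ).congr_deriv (by simp only [id]; ring)
  have hg_mono : Monotone g := by
    refine monotone_of_deriv_nonneg (fun u => (hg u).differentiableAt) fun u => ?_
    have h := mul_le_mul_of_nonneg_right (add_one_le_exp (-u)) (exp_pos u).le
    rw [← exp_add, neg_add_cancel, exp_zero] at h
    rw [(hg u).deriv]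
    linarith
  have hg0 : g 0 = 0 := by simp [g]
  rcases le_total 0 t with ht | ht
  · exact mul_nonneg ht (hg0 ▸ hg_mono ht)
  · exact mul_nonneg_of_nonpos_of_nonpos ht (hg0 ▸ hg_mono ht)

noncomputable def expMoment (k : ℕ) (p q x : ℝ) : ℝ :=
  ∫ s in p..q, s ^ k * exp (s * x)

lemma continuous_pow_mul_exp_mul (k : ℕ) (x : ℝ) :
    Continuous fun s : ℝ => s ^ k * exp (s * x) := by
  fun_prop

lemma hasDerivAt_expMoment (k : ℕ) (p q x : ℝ) :
    HasDerivAt (expMoment k p q) (expMoment (k + 1) p q x) x := by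
  obtain ⟨C, hC⟩ := ((isCompact_closedBall x 1).prod isCompact_uIcc).exists_bound_of_continuousOn
    (f := fun z : ℝ × ℝ => z.2 ^ (k + 1) * exp (z.2 * z.1)) (by fun_prop)
  refine (hasDerivAt_integral_of_dominated_loc_of_deriv_le (F := fun y s => s ^ k * exp (s * y))
    (F' := fun y s => s ^ (k + 1) * exp (s * y)) (bound := fun _ => C)
    (Metric.ball_mem_nhds x one_pos)
    (.of_forall fun y => (continuous_pow_mul_exp_mul k y).aestronglyMeasurable)
    ((continuous_pow_mul_exp_mul k x).intervalIntegrable p q)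
    (continuous_pow_mul_exp_mul (k + 1) x).aestronglyMeasurable ?_ intervalIntegrable_const ?_).2
  · exact .of_forall fun s hs y hy =>
      hC (y, s) ⟨Metric.ball_subset_closedBall hy, uIoc_subset_uIcc hs⟩
  · exact .of_forall fun s _ y _ =>
      (((hasDerivAt_const_mul s).exp).const_mul (s ^ k)).congr_deriv (by ring)

section ExpMoment

variable {k : ℕ} {p q x : ℝ}

lemma expMoment_at_zero : expMoment k p q 0 = (q ^ (k + 1) - p ^ (k + 1)) / (k + 1) := by
  simp [expMoment, integral_pow]

lemma integral_quadratic_mul_exp (A B C : ℝ) :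
    ∫ s in p..q, (A * s ^ 2 + B * s + C) * exp (s * x) =
      A * expMoment 2 p q x + B * expMoment 1 p q x + C * expMoment 0 p q x := by
  simp only [expMoment, ← integral_const_mul]
  rw [← integral_add, ← integral_add]
  · congr 1; ext s; ring
  all_goals exact Continuous.intervalIntegrable (by fun_prop) p q

lemma expMoment_eq_sub_of_hasDerivAt {F : ℝ → ℝ} (hF : ∀ s, HasDerivAt F (s ^ k * exp (s * x)) s) :
    expMoment k p q x = F q - F p :=
  integral_eq_sub_of_hasDerivAt (fun s _ => hF s)
    ((continuous_pow_mul_exp_mul k x).intervalIntegrable p q)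

lemma expMoment_zero_of_ne_zero (hx : x ≠ 0) :
    expMoment 0 p q x = (exp (q * x) - exp (p * x)) / x := by
  rw [expMoment_eq_sub_of_hasDerivAt (F := fun s => exp (s * x) / x), sub_div]
  intro s
  exact ((hasDerivAt_mul_const x).exp.div_const x).congr_deriv (by field_simp)

lemma expMoment_one_of_ne_zero (hx : x ≠ 0) :
    expMoment 1 p q x =
      ((q * x - 1) * exp (q * x) - (p * x - 1) * exp (p * x)) / x ^ 2 := by
  rw [expMoment_eq_sub_of_hasDerivAt (F := fun s => (s * x - 1) * exp (s * x) / x ^ 2), sub_div]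
  intro s
  have h := hasDerivAt_mul_const (x := s) x
  exact (((h.sub_const 1).mul h.exp).div_const _).congr_deriv (by field_simp; ring)

lemma expMoment_two_of_ne_zero (hx : x ≠ 0) :
    expMoment 2 p q x =
      (((q * x) ^ 2 - 2 * (q * x) + 2) * exp (q * x)
        - ((p * x) ^ 2 - 2 * (p * x) + 2) * exp (p * x)) / x ^ 3 := by
  rw [expMoment_eq_sub_of_hasDerivAt
    (F := fun s => ((s * x) ^ 2 - 2 * (s * x) + 2) * exp (s * x) / x ^ 3), sub_div]
  intro s
  have h := hasDerivAt_mul_const (x := s) x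
  exact (((((h.pow 2).sub (h.const_mul 2)).add_const 2).mul h.exp).div_const _).congr_deriv
    (by simp only [Pi.sub_apply, Pi.pow_apply]; field_simp; ring)

lemma expMoment_zero_pos (hpq : p < q) : 0 < expMoment 0 p q x :=
  intervalIntegral_pos_of_pos ((continuous_pow_mul_exp_mul 0 x).intervalIntegrable p q)
    (fun s => by simpa using exp_pos (s * x)) hpq

lemma mul_expMoment_zero_lt_expMoment_one (hpq : p < q) {c : ℝ} (hc : c ≤ p) :
    c * expMoment 0 p q x < expMoment 1 p q x := by
  have h := intervalIntegral_pos_of_pos_on (f := fun s => (0 * s ^ 2 + 1 * s + -c) * exp (s * x))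
    (Continuous.intervalIntegrable (by fun_prop) p q)
    (fun s hs => mul_pos (by linarith [hs.1]) (exp_pos _)) hpq
  rw [integral_quadratic_mul_exp] at h
  linarith

lemma expMoment_one_le_mul_expMoment_zero (hpq : p ≤ q) :
    expMoment 1 p q x ≤ q * expMoment 0 p q x := by
  have h := integral_nonneg (μ := MeasureTheory.volume)
    (f := fun s => (0 * s ^ 2 + -1 * s + q) * exp (s * x)) hpq
    (fun s hs => mul_nonneg (by linarith [hs.2]) (exp_pos _).le)
  rw [integral_quadratic_mul_exp] at h
  linarith

lemma sq_expMoment_one_le (hpq : p ≤ q) :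
    expMoment 1 p q x ^ 2 ≤ expMoment 0 p q x * expMoment 2 p q x := by
  have h := discrim_le_zero (a := expMoment 0 p q x) (b := -2 * expMoment 1 p q x)
    (c := expMoment 2 p q x) fun t => by
      have h := integral_nonneg (μ := MeasureTheory.volume)
        (f := fun s => (1 * s ^ 2 + -2 * t * s + t ^ 2) * exp (s * x)) hpq
        (fun s _ => mul_nonneg (by nlinarith [sq_nonneg (s - t)]) (exp_pos _).le)
      rw [integral_quadratic_mul_exp] at h
      linarith
  rw [discrim] at h
  linarith

lemma expMoment_variance_le (p q x : ℝ) :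
    expMoment 0 p q x * expMoment 2 p q x - expMoment 1 p q x ^ 2 ≤
      (q * expMoment 0 p q x - expMoment 1 p q x) ^ 2 := by
  rcases eq_or_ne x 0 with rfl | hx
  · simp only [expMoment_at_zero]
    nlinarith [sq_nonneg ((q - p) ^ 2)]
  rw [← sub_nonneg, expMoment_zero_of_ne_zero hx, expMoment_one_of_ne_zero hx,
    expMoment_two_of_ne_zero hx]
  have hq : exp (q * x) = exp (p * x) * exp ((q - p) * x) := by rw [← exp_add]; ring_nf
  rw [hq]
  have hx4 : (0 : ℝ) ≤ x ^ 4 := by positivity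
  refine (div_nonneg (mul_nonneg (sq_nonneg (exp (p * x)))
    (mul_sub_two_mul_exp_add_two_nonneg ((q - p) * x))) hx4).trans_eq ?_
  field_simp
  ring

end ExpMoment

theorem strictConvexOn_expMoment_zero_div {α β γ δ : ℝ} (hβα : β < α) (hγβ : γ ≤ β) (hδγ : δ < γ) :
    StrictConvexOn ℝ univ fun x => expMoment 0 β α x / expMoment 0 δ γ x :=
  strictConvexOn_univ_div (hasDerivAt_expMoment 0 β α) (hasDerivAt_expMoment 1 β α)
    (hasDerivAt_expMoment 0 δ γ) (hasDerivAt_expMoment 1 δ γ) (fun _ => expMoment_zero_pos hδγ)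
    fun x => quotient_second_deriv_numerator_pos (expMoment_zero_pos hβα) (expMoment_zero_pos hδγ)
      (mul_expMoment_zero_lt_expMoment_one hβα hγβ) (expMoment_one_le_mul_expMoment_zero hδγ.le)
      (sq_expMoment_one_le hβα.le) (expMoment_variance_le δ γ x)

theorem stmt5 (a b c d : ℝ) (hab : a > b) (hbc : b ≥ c) (hcd : c > d) (hd : d > 0) :
    StrictConvexOn ℝ Set.univ (fun x : ℝ =>
      if x = 0 then (Real.log a - Real.log b) / (Real.log c - Real.log d)
      else (a ^ x - b ^ x) / (c ^ x - d ^ x)) := by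
  have hc : 0 < c := hd.trans hcd
  have hb : 0 < b := hc.trans_le hbc
  convert strictConvexOn_expMoment_zero_div (log_lt_log hb hab) (log_le_log hc hbc)
    (log_lt_log hd hcd) using 2 with x
  rcases eq_or_ne x 0 with rfl | hx
  · simp [expMoment_at_zero]
  · rw [if_neg hx, expMoment_zero_of_ne_zero hx, expMoment_zero_of_ne_zero hx,
      div_div_div_cancel_right₀ hx, rpow_def_of_pos (hb.trans hab), rpow_def_of_pos hb,
      rpow_def_of_pos hc, rpow_def_of_pos hd]
end

section
/- For real numbers a > b ≥ c > d > 0, the following chain inequality holds: ((a^b - b^b)/(c^b - d^b) - (a^d - b^d)/(c^d - d^d))/(b - d) < ((a^a - b^a)/(c^a - d^a) - (a^c - b^c)/(c^c - d^c))/(a - c). -/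
/-!
Dividing numerator and denominator by `d ^ x` turns `g x = (a ^ x - b ^ x) / (c ^ x - d ^ x)`
into `(exp ((ρ + α) x) - exp (ρ x)) / (exp (β x) - 1)` with `α = log (a / b)`,
`β = log (c / d)` and `ρ = log (b / d) ≥ β`. This function is strictly convex on `(0, ∞)`:
after scaling by `x ^ 2`, the numerator of its second derivative reduces to an elementary
inequality between exponentials, proved by monotonicity in one variable. The claim compares the
slopes of `g` on the chords `[d, b]` and `[c, a]`, where `d ≤ c` and `b < a`, so it follows from
strict convexity.
-/

open Real Set

lemma StrictConvexOn.slope_lt_slope {𝕜 : Type*} [Field 𝕜] [LinearOrder 𝕜]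
    [IsStrictOrderedRing 𝕜] {s : Set 𝕜} {f : 𝕜 → 𝕜} (hf : StrictConvexOn 𝕜 s f) {x₁ y₁ x₂ y₂ : 𝕜}
    (hx₁ : x₁ ∈ s) (hy₁ : y₁ ∈ s) (hx₂ : x₂ ∈ s) (hy₂ : y₂ ∈ s)
    (hxy₁ : x₁ < y₁) (hxy₂ : x₂ < y₂) (hx : x₁ ≤ x₂) (hy : y₁ < y₂) :
    slope f x₁ y₁ < slope f x₂ y₂ :=
  calc slope f x₁ y₁ < slope f x₁ y₂ := by
        simpa only [slope_def_field] using
          hf.secant_strict_mono hx₁ hy₁ hy₂ hxy₁.ne' (hxy₁.trans hy).ne' hy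
    _ = slope f y₂ x₁ := slope_comm f x₁ y₂
    _ ≤ slope f y₂ x₂ :=
        hf.convexOn.slope_mono hy₂ ⟨hx₁, (hx.trans_lt hxy₂).ne⟩ ⟨hx₂, hxy₂.ne⟩ hx
    _ = slope f x₂ y₂ := slope_comm f y₂ x₂

lemma strictConvexOn_of_hasDerivAt2_pos {D : Set ℝ} (hD : Convex ℝ D) (hDo : IsOpen D)
    {f f' f'' : ℝ → ℝ} (hf : ∀ x ∈ D, HasDerivAt f (f' x) x)
    (hf' : ∀ x ∈ D, HasDerivAt f' (f'' x) x) (hf'' : ∀ x ∈ D, 0 < f'' x) :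
    StrictConvexOn ℝ D f := by
  have hmono : StrictMonoOn f' D :=
    strictMonoOn_of_hasDerivWithinAt_pos hD
      (fun x hx => (hf' x hx).continuousAt.continuousWithinAt)
      (fun x hx => (hf' x (interior_subset hx)).hasDerivWithinAt)
      (fun x hx => hf'' x (interior_subset hx))
  refine StrictMonoOn.strictConvexOn_of_deriv hD
    (fun x hx => (hf x hx).continuousAt.continuousWithinAt) ?_
  rw [hDo.interior_eq]
  exact hmono.congr fun x hx => (hf x hx).deriv.symm

lemma strictConvexOn_div_of_hasDerivAt2 {D : Set ℝ} (hD : Convex ℝ D) (hDo : IsOpen D)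
    {p p' p'' q q' q'' : ℝ → ℝ}
    (hp : ∀ x ∈ D, HasDerivAt p (p' x) x) (hp' : ∀ x ∈ D, HasDerivAt p' (p'' x) x)
    (hq : ∀ x ∈ D, HasDerivAt q (q' x) x) (hq' : ∀ x ∈ D, HasDerivAt q' (q'' x) x)
    (hq₀ : ∀ x ∈ D, 0 < q x)
    (hpq : ∀ x ∈ D,
      0 < (p'' x * q x - p x * q'' x) * q x - 2 * q' x * (p' x * q x - p x * q' x)) :
    StrictConvexOn ℝ D fun x => p x / q x := by
  refine strictConvexOn_of_hasDerivAt2_pos hD hDo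
    (f' := fun x => (p' x * q x - p x * q' x) / q x ^ 2)
    (f'' := fun x =>
      ((p'' x * q x - p x * q'' x) * q x - 2 * q' x * (p' x * q x - p x * q' x)) / q x ^ 3)
    (fun x hx => (hp x hx).div (hq x hx) (hq₀ x hx).ne') (fun x hx => ?_)
    (fun x hx => div_pos (hpq x hx) (pow_pos (hq₀ x hx) 3))
  have hqx := (hq₀ x hx).ne'
  refine ((((hp' x hx).fun_mul (hq x hx)).fun_sub ((hp x hx).fun_mul (hq' x hx))).fun_div
    ((hq x hx).fun_pow 2) (pow_ne_zero 2 hqx)).congr_deriv ?_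
  field_simp
  ring

namespace Real

lemma one_sub_mul_exp_lt_one {x : ℝ} (hx : x ≠ 0) : (1 - x) * exp x < 1 := by
  have h := mul_lt_mul_of_pos_right (one_sub_lt_exp_neg hx) (exp_pos x)
  rwa [← exp_add, neg_add_cancel, exp_zero] at h

lemma two_mul_exp_sub_one_lt {t : ℝ} (ht : 0 < t) : 2 * (exp t - 1) < t * (exp t + 1) := by
  have hmono : StrictMonoOn (fun u => (u - 2) * exp u + (u + 2)) (Ici 0) := by
    refine strictMonoOn_of_hasDerivWithinAt_pos (convex_Ici 0) (by fun_prop)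
      (f' := fun u => (u - 1) * exp u + 1) (fun u _ => ?_) (fun u hu => ?_)
    · refine ((((hasDerivAt_id u).sub_const 2).mul (hasDerivAt_exp u)).add
        ((hasDerivAt_id u).add_const 2)).hasDerivWithinAt.congr_deriv ?_
      simp only [id]
      ring
    · rw [interior_Ici] at hu
      linarith [one_sub_mul_exp_lt_one hu.ne']
  have h := hmono self_mem_Ici ht.le ht
  simp only [exp_zero] at h
  linarith

lemma sq_lt_exp_mul_sq_add {s t : ℝ} (hs : 0 < s) (ht : 0 < t) :
    t ^ 2 < exp s * (t - s * (exp t - 1)) ^ 2 + t ^ 2 * (exp s - 1) * exp t := by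
  set F := exp t
  have hF : t < F - 1 := by linarith [add_one_lt_exp ht.ne']
  have hmono : StrictMonoOn (fun σ => exp σ * ((t - σ * (F - 1)) ^ 2 + t ^ 2 * F)) (Ici 0) := by
    refine strictMonoOn_of_hasDerivWithinAt_pos (convex_Ici 0) (by fun_prop)
      (f' := fun σ => exp σ * ((t - σ * (F - 1)) ^ 2 + t ^ 2 * F
        - 2 * (F - 1) * (t - σ * (F - 1)))) (fun σ _ => ?_) (fun σ hσ => ?_)
    · refine ((hasDerivAt_exp σ).fun_mul ((((hasDerivAt_const σ t).fun_sub
        ((hasDerivAt_id σ).mul_const (F - 1))).fun_pow 2).add_const (t ^ 2 * F))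
        ).hasDerivWithinAt.congr_deriv ?_
      simp only [id]
      ring
    · rw [interior_Ici] at hσ
      have hσ : 0 < σ * (F - 1) := mul_pos hσ (by linarith)
      -- the bracket of the derivative is exactly `h₁ + h₂`
      have h₁ : 0 < t * (t * (F + 1) - 2 * (F - 1)) :=
        mul_pos ht (by linarith [two_mul_exp_sub_one_lt ht])
      have h₂ : 0 < σ * (F - 1) * (σ * (F - 1) + 2 * (F - 1 - t)) :=
        mul_pos hσ (by linarith)
      exact mul_pos (exp_pos σ) (by linarith)
  have h := hmono self_mem_Ici hs.le hs
  simp only [exp_zero] at h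
  linarith

lemma sq_mul_exp_mul_sq_lt {s t m : ℝ} (hs : 0 < s) (ht : 0 < t)
    (hm : s * exp s * (exp t - 1) - t * (exp s - 1) ≤ m) :
    s ^ 2 * exp s * (exp t - 1) ^ 2 < m ^ 2 + t ^ 2 * exp t * (exp s - 1) ^ 2 := by
  set E := exp s
  set F := exp t
  have hE : E - 1 < s * E := by linarith [one_sub_mul_exp_lt_one hs.ne']
  have hF : t < F - 1 := by linarith [add_one_lt_exp ht.ne']
  have hE₁ : 0 < E - 1 := sub_pos.mpr (one_lt_exp_iff.mpr hs)
  have hm₀ : 0 < s * E * (F - 1) - t * (E - 1) := by nlinarith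
  have hsq : (s * E * (F - 1) - t * (E - 1)) ^ 2 ≤ m ^ 2 := pow_le_pow_left₀ hm₀.le hm 2
  have key : (s * E * (F - 1) - t * (E - 1)) ^ 2 + t ^ 2 * F * (E - 1) ^ 2
      - s ^ 2 * E * (F - 1) ^ 2
      = (E - 1) * (E * (t - s * (F - 1)) ^ 2 + t ^ 2 * (E - 1) * F - t ^ 2) := by ring
  have := mul_pos hE₁ (sub_pos.mpr (sq_lt_exp_mul_sq_add hs ht))
  linarith

end Real

theorem strictConvexOn_exp_sub_exp_div_exp_sub_one {ρ α β : ℝ} (hα : 0 < α) (hβ : 0 < β)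
    (hβρ : β ≤ ρ) :
    StrictConvexOn ℝ (Ioi 0) fun x => (exp ((ρ + α) * x) - exp (ρ * x)) / (exp (β * x) - 1) := by
  have hexp (c x : ℝ) : HasDerivAt (fun y => exp (c * y)) (c * exp (c * x)) x := by
    simpa [mul_comm] using ((hasDerivAt_id x).const_mul c).exp
  refine strictConvexOn_div_of_hasDerivAt2 (convex_Ioi 0) isOpen_Ioi
    (p' := fun x => (ρ + α) * exp ((ρ + α) * x) - ρ * exp (ρ * x))
    (p'' := fun x => (ρ + α) ^ 2 * exp ((ρ + α) * x) - ρ ^ 2 * exp (ρ * x))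
    (q' := fun x => β * exp (β * x)) (q'' := fun x => β ^ 2 * exp (β * x))
    (fun x _ => (hexp _ x).sub (hexp _ x)) (fun x _ => ?_)
    (fun x _ => (hexp β x).sub_const 1) (fun x _ => ?_) (fun x hx => ?_) (fun x hx => ?_)
  · exact (((hexp _ x).const_mul _).sub ((hexp _ x).const_mul _)).congr_deriv (by ring)
  · exact ((hexp _ x).const_mul _).congr_deriv (by ring)
  · exact sub_pos.mpr (one_lt_exp_iff.mpr (mul_pos hβ hx))
  · have hx : 0 < x := hx
    have hE : 0 < exp (α * x) - 1 := sub_pos.mpr (one_lt_exp_iff.mpr (mul_pos hα hx))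
    have hF : 0 < exp (β * x) - 1 := sub_pos.mpr (one_lt_exp_iff.mpr (mul_pos hβ hx))
    have hρβ : 0 ≤ (ρ - β) * x * (exp (α * x) - 1) * (exp (β * x) - 1) := by
      have := sub_nonneg.mpr hβρ
      positivity
    obtain ⟨m, hm⟩ : ∃ m, m = ρ * x * (exp (α * x) - 1) * (exp (β * x) - 1)
        + α * x * exp (α * x) * (exp (β * x) - 1) - β * x * exp (β * x) * (exp (α * x) - 1) :=
      ⟨_, rfl⟩
    have key := sq_mul_exp_mul_sq_lt (mul_pos hα hx) (mul_pos hβ hx) (m := m)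
      (by rw [hm]; linarith)
    rw [show (ρ + α) * x = ρ * x + α * x by ring, exp_add]
    set E := exp (α * x)
    set F := exp (β * x)
    -- each derivative brings out a factor `α`, `β` or `ρ`; multiplying by `x ^ 2` makes the
    -- numerator a function of `α x`, `β x`, `ρ x` only
    refine pos_of_mul_pos_right (a := x ^ 2 * (E - 1)) ?_ (by positivity)
    calc 0 < exp (ρ * x) *
          (m ^ 2 + (β * x) ^ 2 * F * (E - 1) ^ 2 - (α * x) ^ 2 * E * (F - 1) ^ 2) :=
          mul_pos (exp_pos _) (by linarith)
      _ = _ := by rw [hm]; ring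

theorem strictConvexOn_rpow_sub_rpow_div_rpow_sub_rpow {a b c d : ℝ} (hd : 0 < d) (hdc : d < c)
    (hcb : c ≤ b) (hba : b < a) :
    StrictConvexOn ℝ (Ioi 0) fun x : ℝ => (a ^ x - b ^ x) / (c ^ x - d ^ x) := by
  have hc := hd.trans hdc
  have hb := hc.trans_le hcb
  have ha := hb.trans hba
  convert strictConvexOn_exp_sub_exp_div_exp_sub_one (ρ := log b - log d) (α := log a - log b)
    (β := log c - log d) (sub_pos.mpr (log_lt_log hb hba)) (sub_pos.mpr (log_lt_log hd hdc))
    (sub_le_sub_right (log_le_log hc hcb) _) using 2 with x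
  rw [rpow_def_of_pos ha, rpow_def_of_pos hb, rpow_def_of_pos hc, rpow_def_of_pos hd,
    ← mul_div_mul_left _ (exp ((log c - log d) * x) - 1) (exp_ne_zero (log d * x)), mul_sub,
    mul_sub, mul_one, ← exp_add, ← exp_add, ← exp_add]
  ring_nf

theorem stmt6 (a b c d : ℝ) (hab : a > b) (hbc : b ≥ c) (hcd : c > d) (hd : d > 0) :
    ((a ^ b - b ^ b) / (c ^ b - d ^ b) - (a ^ d - b ^ d) / (c ^ d - d ^ d)) / (b - d) <
    ((a ^ a - b ^ a) / (c ^ a - d ^ a) - (a ^ c - b ^ c) / (c ^ c - d ^ c)) / (a - c) := by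
  have hc : c ∈ Ioi 0 := hd.trans hcd
  have hb : b ∈ Ioi 0 := hc.out.trans_le hbc
  have ha : a ∈ Ioi 0 := hb.out.trans hab
  simpa only [slope_def_field] using
    (strictConvexOn_rpow_sub_rpow_div_rpow_sub_rpow hd hcd hbc hab).slope_lt_slope hd hb hc ha
      (hcd.trans_le hbc) (hbc.trans_lt hab) hcd.le hab
end

section
/- For real numbers a > b > 0, exp(1 - b/L(a,b)) < I(a,b)/b < exp(L(a,b)/b - 1). -/
lemma sinh_lt_mul_cosh_s8 (u : ℝ) (hu : 0 < u) : Real.sinh u < u * Real.cosh u := by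
  have key : StrictMonoOn (fun x : ℝ => x * Real.cosh x - Real.sinh x) (Set.Ici 0) := by
    apply strictMonoOn_of_deriv_pos (convex_Ici 0)
    · fun_prop
    · intro x hx
      rw [interior_Ici] at hx
      have hd : HasDerivAt (fun x : ℝ => x * Real.cosh x - Real.sinh x)
          (1 * Real.cosh x + x * Real.sinh x - Real.cosh x) x :=
        ((hasDerivAt_id x).mul (Real.hasDerivAt_cosh x)).sub (Real.hasDerivAt_sinh x)
      rw [hd.deriv]
      have hx' : (0:ℝ) < x := hx
      have := mul_pos hx' (Real.sinh_pos_iff.mpr hx')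
      nlinarith
  have h0 : (0:ℝ) ∈ Set.Ici (0:ℝ) := Set.self_mem_Ici
  have := key h0 (le_of_lt hu : u ∈ Set.Ici 0) hu
  simp at this
  linarith

theorem stmt8 (a b : ℝ) (hab : a > b) (hb : b > 0) :
    Real.exp (1 - b / ((a - b) / (Real.log a - Real.log b))) <
      ((1 / Real.exp 1) * (a ^ a / b ^ b) ^ (1 / (a - b))) / b ∧
    ((1 / Real.exp 1) * (a ^ a / b ^ b) ^ (1 / (a - b))) / b <
      Real.exp (((a - b) / (Real.log a - Real.log b)) / b - 1) := by
  have ha : 0 < a := lt_trans hb hab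
  have hab' : 0 < a - b := sub_pos.mpr hab
  set t := Real.log a - Real.log b with htdef
  have ht : 0 < t := sub_pos.mpr (Real.log_lt_log hb hab)
  set E := Real.exp (t / 2) with hEdef
  have hE : 0 < E := Real.exp_pos _
  have hEi : E * E⁻¹ = 1 := mul_inv_cancel₀ (ne_of_gt hE)
  have hEE : E * E = Real.exp t := by
    rw [hEdef, ← Real.exp_add]; ring_nf
  have hax : a = b * (E * E) := by
    rw [hEE, htdef, Real.exp_sub, Real.exp_log ha, Real.exp_log hb]
    field_simp
  -- hyperbolic inequalities
  have hs1 : t / 2 < Real.sinh (t / 2) := Real.self_lt_sinh_iff.mpr (by linarith)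
  have hs2 : Real.sinh (t / 2) < (t / 2) * Real.cosh (t / 2) :=
    sinh_lt_mul_cosh_s8 _ (by linarith)
  have hsinh : Real.sinh (t / 2) = (E - E⁻¹) / 2 := by
    rw [Real.sinh_eq, Real.exp_neg, hEdef]
  have hcosh : Real.cosh (t / 2) = (E + E⁻¹) / 2 := by
    rw [Real.cosh_eq, Real.exp_neg, hEdef]
  rw [hsinh] at hs1 hs2
  rw [hcosh] at hs2
  -- key algebraic inequalities
  have key1 : 2 * (a - b) < (a + b) * t := by
    rw [hax]
    have h1 : E - E⁻¹ < t * (E + E⁻¹) / 2 := by linarith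
    have h2 : (E - E⁻¹) * E < t * (E + E⁻¹) / 2 * E := by
      exact mul_lt_mul_of_pos_right h1 hE
    have h3 : E * E - 1 < t * (E * E + 1) / 2 := by nlinarith [h2, hEi]
    nlinarith [mul_lt_mul_of_pos_left h3 hb]
  have key2 : a * b * t ^ 2 < (a - b) ^ 2 := by
    rw [hax]
    have h1 : t < E - E⁻¹ := by linarith
    have h2 : t * E < (E - E⁻¹) * E := mul_lt_mul_of_pos_right h1 hE
    have h3 : t * E < E * E - 1 := by nlinarith [h2, hEi]
    have h4 : 0 < t * E := mul_pos ht hE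
    have h5 : t * E * (t * E) < (E * E - 1) * (E * E - 1) :=
      mul_self_lt_mul_self (le_of_lt h4) h3
    nlinarith [mul_lt_mul_of_pos_left h5 (mul_pos hb hb)]
  -- rewrite the mean as an exponential
  have hI : ((1 / Real.exp 1) * (a ^ a / b ^ b) ^ (1 / (a - b))) / b
      = Real.exp (a * t / (a - b) - 1) := by
    have h1 : a ^ a / b ^ b = Real.exp (Real.log a * a - Real.log b * b) := by
      rw [Real.rpow_def_of_pos ha, Real.rpow_def_of_pos hb, ← Real.exp_sub]
    have h2 : (Real.exp (Real.log a * a - Real.log b * b)) ^ (1 / (a - b))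
        = Real.exp ((Real.log a * a - Real.log b * b) * (1 / (a - b))) := by
      rw [Real.rpow_def_of_pos (Real.exp_pos _), Real.log_exp]
    rw [h1, h2]
    have hdiv : ∀ X : ℝ, Real.exp X / b = Real.exp (X - Real.log b) := fun X => by
      rw [Real.exp_sub, Real.exp_log hb]
    rw [one_div (Real.exp 1), ← Real.exp_neg, ← Real.exp_add, hdiv, Real.exp_eq_exp, htdef]
    have hne : a - b ≠ 0 := ne_of_gt hab'
    field_simp
    ring
  rw [hI]
  constructor
  · rw [Real.exp_lt_exp, div_div_eq_mul_div]
    have h1 : b * t / (a - b) + a * t / (a - b) = (a + b) * t / (a - b) := by ring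
    have h2 : 2 < (a + b) * t / (a - b) := (lt_div_iff₀ hab').mpr key1
    linarith
  · rw [Real.exp_lt_exp, div_div]
    have h2 : a * t / (a - b) < (a - b) / (t * b) := by
      rw [div_lt_div_iff₀ hab' (mul_pos ht hb)]
      nlinarith [key2]
    linarith
end

section
/- For real a > b > 0, L(a,b)/b > 1 + (1/2)ln(a/b) > 2a/(a+b) > ln(a/b) / (2 ln(I(a,b)/b)), where L(a,b) = (a-b)/(ln a - ln b) and I(a,b) = (1/e)(a^a/b^b)^{1/(a-b)}. -/
/-!
Normalise by `b`: with `t = a / b > 1` and `s = log t`, the four quantities are `(t - 1) / s`,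
`1 + s / 2`, `2t / (t + 1)` and `s / (2 (t s / (t - 1) - 1))`. The first inequality is
`e^s > 1 + s + s² / 2`. The other two both follow from `log t > 2 (t - 1) / (t + 1)`, the first
term of the series `log ((1 + x) / (1 - x)) = 2 ∑ x^(2k+1) / (2k+1)` at `x = (t - 1) / (t + 1)`.
-/

open Real Finset

theorem Real.one_add_add_sq_div_two_lt_exp {x : ℝ} (hx : 0 < x) : 1 + x + x ^ 2 / 2 < exp x := by
  have := sum_le_exp_of_nonneg hx.le 4
  norm_num [sum_range_succ, Nat.factorial] at this
  nlinarith [pow_pos hx 3]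

theorem Real.two_mul_lt_log_one_add_sub_log_one_sub {x : ℝ} (hx₀ : 0 < x) (hx₁ : x < 1) :
    2 * x < log (1 + x) - log (1 - x) := by
  have hseries := hasSum_log_sub_log_of_abs_lt_one (abs_lt.mpr ⟨by linarith, hx₁⟩)
  have := sum_le_hasSum (range 2) (fun k _ => by positivity) hseries
  norm_num [sum_range_succ] at this
  nlinarith [pow_pos hx₀ 3]

theorem Real.two_mul_sub_one_div_add_one_lt_log {t : ℝ} (ht : 1 < t) :
    2 * (t - 1) / (t + 1) < log t := by
  have ht₀ : 0 < t + 1 := by linarith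
  have hx₁ : (t - 1) / (t + 1) < 1 := (div_lt_one ht₀).mpr (by linarith)
  have key := two_mul_lt_log_one_add_sub_log_one_sub (div_pos (by linarith) ht₀) hx₁
  rw [← log_div (by positivity) (by linarith)] at key
  convert key using 2
  · ring
  · field_simp; ring

section Normalized

variable {t : ℝ}

theorem sub_one_lt_mul_log (ht : 1 < t) : t - 1 < t * log t := by
  have key := two_mul_sub_one_div_add_one_lt_log ht
  rw [div_lt_iff₀ (by linarith)] at key
  nlinarith

theorem four_mul_mul_sub_one_lt_log_mul (ht : 1 < t) :
    4 * t * (t - 1) < log t * (3 * t ^ 2 + 1) := by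
  have key := two_mul_sub_one_div_add_one_lt_log ht
  rw [div_lt_iff₀ (by linarith)] at key
  have h3 : 0 < 3 * t ^ 2 + 1 := by positivity
  nlinarith [mul_lt_mul_of_pos_right key h3, pow_pos (sub_pos.mpr ht) 3]

theorem one_add_log_div_two_lt_sub_one_div_log (ht : 1 < t) :
    1 + log t / 2 < (t - 1) / log t := by
  have hs : 0 < log t := log_pos ht
  have hexp := one_add_add_sq_div_two_lt_exp hs
  rw [exp_log (by linarith)] at hexp
  rw [lt_div_iff₀ hs]
  nlinarith

theorem two_mul_div_add_one_lt_one_add_log_div_two (ht : 1 < t) :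
    2 * t / (t + 1) < 1 + log t / 2 := by
  have key := two_mul_sub_one_div_add_one_lt_log ht
  have : 2 * t / (t + 1) = 1 + (t - 1) / (t + 1) := by field_simp; ring
  rw [this]
  linarith [mul_div_assoc 2 (t - 1) (t + 1)]

theorem log_div_two_mul_lt_two_mul_div_add_one (ht : 1 < t) :
    log t / (2 * (t * log t / (t - 1) - 1)) < 2 * t / (t + 1) := by
  have ht₁ : 0 < t - 1 := by linarith
  have hpos : 0 < t * log t / (t - 1) - 1 := by
    rw [sub_pos, one_lt_div ht₁]
    exact sub_one_lt_mul_log ht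
  rw [div_lt_div_iff₀ (by positivity) (by linarith)]
  have : 2 * t * (2 * (t * log t / (t - 1) - 1)) = 4 * t * (t * log t - (t - 1)) / (t - 1) := by
    field_simp; ring
  rw [this, lt_div_iff₀ ht₁]
  nlinarith [four_mul_mul_sub_one_lt_log_mul ht]

end Normalized

section Homogeneity

variable {a b : ℝ}

theorem logarithmicMean_div_right (hb : 0 < b) (hab : b < a) :
    (a - b) / (log a - log b) / b = (a / b - 1) / log (a / b) := by
  rw [log_div (by linarith) hb.ne']
  field_simp

theorem log_identricMean_div_right (hb : 0 < b) (hab : b < a) :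
    log ((1 / exp 1) * (a ^ a / b ^ b) ^ (1 / (a - b)) / b) =
      a / b * log (a / b) / (a / b - 1) - 1 := by
  have ha : 0 < a := hb.trans hab
  have hab' : a - b ≠ 0 := by linarith
  rw [log_div (by positivity) hb.ne', log_mul (by positivity) (by positivity),
    log_rpow (by positivity), one_div, log_inv, log_exp, log_div (by positivity) (by positivity),
    log_rpow ha, log_rpow hb, log_div ha.ne' hb.ne']
  field_simp
  ring

theorem two_mul_div_add_eq_div_right (hb : 0 < b) :
    2 * a / (a + b) = 2 * (a / b) / (a / b + 1) := by
  field_simp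

end Homogeneity

theorem stmt13 (a b : ℝ) (hab : a > b) (hb : b > 0) :
    ((a - b) / (Real.log a - Real.log b)) / b > 1 + (1 / 2) * Real.log (a / b) ∧
    1 + (1 / 2) * Real.log (a / b) > 2 * a / (a + b) ∧
    2 * a / (a + b) >
      Real.log (a / b) /
        (2 * Real.log ((((1 / Real.exp 1) * (a ^ a / b ^ b) ^ (1 / (a - b)))) / b)) := by
  have ht : 1 < a / b := (one_lt_div hb).mpr hab
  rw [logarithmicMean_div_right hb hab, log_identricMean_div_right hb hab,
    two_mul_div_add_eq_div_right hb, one_div_mul_eq_div]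
  exact ⟨one_add_log_div_two_lt_sub_one_div_log ht,
    two_mul_div_add_one_lt_one_add_log_div_two ht, log_div_two_mul_lt_two_mul_div_add_one ht⟩
end

section
/- For every natural number n ≥ 1: (2n+3)/(2n+1) < ((n+2)/(n+1))·((1 + 1/(n+1))^{n+1}/(1 + 1/n)^n) < ln(1 + 1/n)/ln(1 + 1/(n+1)) < √((n+2)/n) < (n+2)(2n+1)/(n(2n+3)). -/
set_option maxHeartbeats 1600000

open Real

noncomputable def fl (x : ℝ) : ℝ := 2*x + 2*x^3/3 + 2*x^5/5 - 3*x^7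
noncomputable def gu (x : ℝ) : ℝ := 2*x + 2*x^3/3 + 2*x^5/5 + 3*x^7
noncomputable def eb (x : ℝ) : ℝ := 2*x + 4*x^3/3 + 21*x^5/5



lemma log_bounds {x : ℝ} (hx : 0 < x) (hx3 : x ≤ 1/3) :
    fl x ≤ Real.log ((1+x)/(1-x)) ∧ Real.log ((1+x)/(1-x)) ≤ gu x := by
  simp only [fl, gu]
  have hx1 : |x| < 1 := by rw [abs_of_pos hx]; linarith
  have hx1' : |(-x)| < 1 := by rw [abs_neg]; exact hx1
  have h1 := Real.abs_log_sub_add_sum_range_le hx1 6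
  have h2 := Real.abs_log_sub_add_sum_range_le hx1' 6
  rw [abs_of_pos hx] at h1
  rw [abs_neg, abs_of_pos hx] at h2
  simp only [Finset.sum_range_succ, Finset.sum_range_zero] at h1 h2
  rw [abs_le] at h1 h2
  obtain ⟨h1a, h1b⟩ := h1
  obtain ⟨h2a, h2b⟩ := h2
  rw [sub_neg_eq_add] at h2a h2b
  have hden : (0:ℝ) < 1 - x := by linarith
  have hlog : Real.log ((1+x)/(1-x)) = Real.log (1+x) - Real.log (1-x) :=
    Real.log_div (by linarith) (by linarith)
  have hb : x^7/(1-x) ≤ (3/2) * x^7 := by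
    rw [div_le_iff₀ hden]
    nlinarith [pow_nonneg hx.le 7]
  push_cast at h1a h1b h2a h2b
  norm_num at h1a h1b h2a h2b
  constructor <;> nlinarith [h1a, h1b, h2a, h2b, hb]


lemma exp_lt_sq {z : ℝ} (hz : 0 < z) (hz1 : z ≤ 1) : Real.exp z < ((4+z)/(4-z))^2 := by
  have h4 : (0:ℝ) < 4 - z := by linarith
  have h4' : (0:ℝ) < 4 + z := by linarith
  have hq : (0:ℝ) < (4+z)/(4-z) := div_pos h4' h4
  have hlb := (log_bounds (x := z/4) (by linarith) (by linarith)).1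
  simp only [fl] at hlb
  have heq : (1 + z/4)/(1 - z/4) = (4+z)/(4-z) := by
    rw [div_eq_div_iff (by linarith) (ne_of_gt h4)]; ring
  rw [heq] at hlb
  have h73 : z^7 ≤ z^3 := pow_le_pow_of_le_one hz.le hz1 (by norm_num)
  have hlog : z < 2 * Real.log ((4+z)/(4-z)) := by nlinarith [pow_pos hz 3, pow_pos hz 5]
  calc Real.exp z < Real.exp (2 * Real.log ((4+z)/(4-z))) := Real.exp_lt_exp.2 hlog
    _ = ((4+z)/(4-z))^2 := by rw [two_mul, Real.exp_add, Real.exp_log hq]; ring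

lemma fl_pos {x : ℝ} (hx : 0 < x) (hx3 : x ≤ 1/3) : 0 < fl x := by
  have h2 : x^2 ≤ 1/9 := by nlinarith
  have h5 : 0 < x^5 := pow_pos hx 5
  have hm : x^5 * x^2 ≤ x^5 * (1/9) := mul_le_mul_of_nonneg_left h2 h5.le
  simp only [fl]
  nlinarith [pow_pos hx 3, hx]


lemma ineq1 (N : ℝ) (hN : 1 ≤ N) : gu (1/(2*N+2)) < ((N)+2)*fl (1/(2*N+3)) - (N)*gu (1/(2*N+1)) := by
  obtain ⟨M, hM, rfl⟩ : ∃ M : ℝ, 0 ≤ M ∧ N = 1 + M := ⟨N - 1, by linarith, by ring⟩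
  have e1 : (2*(1+M)+1) ≠ 0 := by intro h; nlinarith
  have e2 : (2*(1+M)+2) ≠ 0 := by intro h; nlinarith
  have e3 : (2*(1+M)+3) ≠ 0 := by intro h; nlinarith
  have p1 : (0:ℝ) < 2*(1+M)+1 := by linarith
  have p2 : (0:ℝ) < 2*(1+M)+2 := by linarith
  have p3 : (0:ℝ) < 2*(1+M)+3 := by linarith
  have key : (((1+M))+2)*fl (1/(2*(1+M)+3)) - ((1+M))*gu (1/(2*(1+M)+1)) - (gu (1/(2*(1+M)+2))) = (457802247645 + 4363820506800*M + 19519741589676*M^2 + 54470323376256*M^3 + 106317677253136*M^4 + 154212981854464*M^5 + 172349947974080*M^6 + 151813240765696*M^7 + 106880846628608*M^8 + 60611038371328*M^9 + 27759458409472*M^10 + 10245802342400*M^11 + 3025554075648*M^12 + 705229070336*M^13 + 126918541312*M^14 + 17019011072*M^15 + 1601437696*M^16 + 94371840*M^17 + 2621440*M^18) / (15*(2*(1+M)+1)^7*(2*(1+M)+2)^7*(2*(1+M)+3)^7) := by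
    simp only [fl, gu, eb]
    field_simp
    ring
  have hP : (0:ℝ) < 457802247645 + 4363820506800*M + 19519741589676*M^2 + 54470323376256*M^3 + 106317677253136*M^4 + 154212981854464*M^5 + 172349947974080*M^6 + 151813240765696*M^7 + 106880846628608*M^8 + 60611038371328*M^9 + 27759458409472*M^10 + 10245802342400*M^11 + 3025554075648*M^12 + 705229070336*M^13 + 126918541312*M^14 + 17019011072*M^15 + 1601437696*M^16 + 94371840*M^17 + 2621440*M^18 := by linarith [pow_nonneg hM 2, pow_nonneg hM 3, pow_nonneg hM 4, pow_nonneg hM 5, pow_nonneg hM 6, pow_nonneg hM 7, pow_nonneg hM 8, pow_nonneg hM 9, pow_nonneg hM 10, pow_nonneg hM 11, pow_nonneg hM 12, pow_nonneg hM 13, pow_nonneg hM 14, pow_nonneg hM 15, pow_nonneg hM 16, pow_nonneg hM 17, pow_nonneg hM 18]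
  have hQ : (0:ℝ) < 15*(2*(1+M)+1)^7*(2*(1+M)+2)^7*(2*(1+M)+3)^7 := by
    have q1 := pow_pos p1 14
    have q2 := pow_pos p2 14
    have q3 := pow_pos p3 14
    have q4 := pow_pos p1 7
    have q5 := pow_pos p2 7
    have q6 := pow_pos p3 7
    have q7 := pow_pos p2 5
    have q8 := pow_pos p2 10
    positivity
  linarith [key, div_pos hP hQ]


lemma ineq2a (N : ℝ) (hN : 1 ≤ N) : ((N)+2)*gu (1/(2*N+3)) - (N)*fl (1/(2*N+1)) < eb (1/(2*N+2)) := by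
  obtain ⟨M, hM, rfl⟩ : ∃ M : ℝ, 0 ≤ M ∧ N = 1 + M := ⟨N - 1, by linarith, by ring⟩
  have e1 : (2*(1+M)+1) ≠ 0 := by intro h; nlinarith
  have e2 : (2*(1+M)+2) ≠ 0 := by intro h; nlinarith
  have e3 : (2*(1+M)+3) ≠ 0 := by intro h; nlinarith
  have p1 : (0:ℝ) < 2*(1+M)+1 := by linarith
  have p2 : (0:ℝ) < 2*(1+M)+2 := by linarith
  have p3 : (0:ℝ) < 2*(1+M)+3 := by linarith
  have key : eb (1/(2*(1+M)+2)) - ((((1+M))+2)*gu (1/(2*(1+M)+3)) - ((1+M))*fl (1/(2*(1+M)+1))) = (178640145 + 7046640720*M + 41782922004*M^2 + 120673522560*M^3 + 215202177968*M^4 + 262039322688*M^5 + 229413270080*M^6 + 148419044224*M^7 + 71814597376*M^8 + 25986653696*M^9 + 6945967104*M^10 + 1333176320*M^11 + 174034944*M^12 + 13852672*M^13 + 507904*M^14) / (15*(2*(1+M)+1)^7*(2*(1+M)+2)^5*(2*(1+M)+3)^7) := by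
    simp only [fl, gu, eb]
    field_simp
    ring
  have hP : (0:ℝ) < 178640145 + 7046640720*M + 41782922004*M^2 + 120673522560*M^3 + 215202177968*M^4 + 262039322688*M^5 + 229413270080*M^6 + 148419044224*M^7 + 71814597376*M^8 + 25986653696*M^9 + 6945967104*M^10 + 1333176320*M^11 + 174034944*M^12 + 13852672*M^13 + 507904*M^14 := by linarith [pow_nonneg hM 2, pow_nonneg hM 3, pow_nonneg hM 4, pow_nonneg hM 5, pow_nonneg hM 6, pow_nonneg hM 7, pow_nonneg hM 8, pow_nonneg hM 9, pow_nonneg hM 10, pow_nonneg hM 11, pow_nonneg hM 12, pow_nonneg hM 13, pow_nonneg hM 14]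
  have hQ : (0:ℝ) < 15*(2*(1+M)+1)^7*(2*(1+M)+2)^5*(2*(1+M)+3)^7 := by
    have q1 := pow_pos p1 14
    have q2 := pow_pos p2 14
    have q3 := pow_pos p3 14
    have q4 := pow_pos p1 7
    have q5 := pow_pos p2 7
    have q6 := pow_pos p3 7
    have q7 := pow_pos p2 5
    have q8 := pow_pos p2 10
    positivity
  linarith [key, div_pos hP hQ]


lemma ineq2b (N : ℝ) (hN : 1 ≤ N) : (4+eb (1/(2*N+2)))^2 * gu (1/(2*N+3)) < fl (1/(2*N+1)) * (4-eb (1/(2*N+2)))^2 := by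
  obtain ⟨M, hM, rfl⟩ : ∃ M : ℝ, 0 ≤ M ∧ N = 1 + M := ⟨N - 1, by linarith, by ring⟩
  have e1 : (2*(1+M)+1) ≠ 0 := by intro h; nlinarith
  have e2 : (2*(1+M)+2) ≠ 0 := by intro h; nlinarith
  have e3 : (2*(1+M)+3) ≠ 0 := by intro h; nlinarith
  have p1 : (0:ℝ) < 2*(1+M)+1 := by linarith
  have p2 : (0:ℝ) < 2*(1+M)+2 := by linarith
  have p3 : (0:ℝ) < 2*(1+M)+3 := by linarith
  have key : fl (1/(2*(1+M)+1)) * (4-eb (1/(2*(1+M)+2)))^2 - ((4+eb (1/(2*(1+M)+2)))^2 * gu (1/(2*(1+M)+3))) = (29981888882159940 + 333271248626199060*M + 1727310507064326768*M^2 + 5575984560821113104*M^3 + 12613285601708719808*M^4 + 21299762218859532480*M^5 + 27904968038054686720*M^6 + 29077270676802881280*M^7 + 24496101688982799360*M^8 + 16859690685253140480*M^9 + 9536413185870991360*M^10 + 4442385625607208960*M^11 + 1701749643906498560*M^12 + 533260275851919360*M^13 + 135378255532523520*M^14 + 27418341113856000*M^15 + 4326702081638400*M^16 + 512747687116800*M^17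 + 42933210316800*M^18 + 2264924160000*M^19 + 56623104000*M^20) / (15^3*(2*(1+M)+1)^7*(2*(1+M)+2)^10*(2*(1+M)+3)^7) := by
    simp only [fl, gu, eb]
    field_simp
    ring
  have hP : (0:ℝ) < 29981888882159940 + 333271248626199060*M + 1727310507064326768*M^2 + 5575984560821113104*M^3 + 12613285601708719808*M^4 + 21299762218859532480*M^5 + 27904968038054686720*M^6 + 29077270676802881280*M^7 + 24496101688982799360*M^8 + 16859690685253140480*M^9 + 9536413185870991360*M^10 + 4442385625607208960*M^11 + 1701749643906498560*M^12 + 533260275851919360*M^13 + 135378255532523520*M^14 + 27418341113856000*M^15 + 4326702081638400*M^16 + 512747687116800*M^17 + 42933210316800*M^18 + 2264924160000*M^19 + 56623104000*M^20 := by linarith [pow_nonneg hM 2, pow_nonneg hM 3, pow_nonneg hM 4, pow_nonneg hM 5, pow_nonneg hM 6, pow_nonneg hM 7, pow_nonneg hM 8, pow_nonneg hM 9, pow_nonneg hM 10, pow_nonneg hM 11, pow_nonneg hM 12, pow_nonneg hM 13, pow_nonneg hM 14, pow_nonneg hM 15, pow_nonneg hM 16, pow_nonneg hM 17, pow_nonneg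 hM 18, pow_nonneg hM 19, pow_nonneg hM 20]
  have hQ : (0:ℝ) < 15^3*(2*(1+M)+1)^7*(2*(1+M)+2)^10*(2*(1+M)+3)^7 := by
    have q1 := pow_pos p1 14
    have q2 := pow_pos p2 14
    have q3 := pow_pos p3 14
    have q4 := pow_pos p1 7
    have q5 := pow_pos p2 7
    have q6 := pow_pos p3 7
    have q7 := pow_pos p2 5
    have q8 := pow_pos p2 10
    positivity
  linarith [key, div_pos hP hQ]


lemma ineq3 (N : ℝ) (hN : 1 ≤ N) : (N)*(gu (1/(2*N+1)))^2 < ((N)+2)*(fl (1/(2*N+3)))^2 := by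
  obtain ⟨M, hM, rfl⟩ : ∃ M : ℝ, 0 ≤ M ∧ N = 1 + M := ⟨N - 1, by linarith, by ring⟩
  have e1 : (2*(1+M)+1) ≠ 0 := by intro h; nlinarith
  have e2 : (2*(1+M)+2) ≠ 0 := by intro h; nlinarith
  have e3 : (2*(1+M)+3) ≠ 0 := by intro h; nlinarith
  have p1 : (0:ℝ) < 2*(1+M)+1 := by linarith
  have p2 : (0:ℝ) < 2*(1+M)+2 := by linarith
  have p3 : (0:ℝ) < 2*(1+M)+3 := by linarith
  have key : (((1+M))+2)*(fl (1/(2*(1+M)+3)))^2 - (((1+M))*(gu (1/(2*(1+M)+1)))^2) = (71894075957059050 + 938229376515841800*M + 5830466223116083680*M^2 + 22972051373556339360*M^3 + 64451764177387672032*M^4 + 137091804563610216576*M^5 + 229780270600060114176*M^6 + 311381372935989344256*M^7 + 347274419924224411136*M^8 + 322762519598464143360*M^9 + 252175286104674828288*M^10 + 166584407794120572928*M^11 + 93352219950007492608*M^12 + 44430113946428571648*M^13 + 17942842906580418560*M^14 + 6129495592345796608*M^15 + 1761503379865468928*M^16 + 422283136436011008*M^17 + 83421775567781888*M^18 + 13345152355532800*M^19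 + 1685504089128960*M^20 + 161762938716160*M^21 + 11085377699840*M^22 + 483183820800*M^23 + 10066329600*M^24) / (15^2*(2*(1+M)+1)^14*(2*(1+M)+3)^14) := by
    simp only [fl, gu, eb]
    field_simp
    ring
  have hP : (0:ℝ) < 71894075957059050 + 938229376515841800*M + 5830466223116083680*M^2 + 22972051373556339360*M^3 + 64451764177387672032*M^4 + 137091804563610216576*M^5 + 229780270600060114176*M^6 + 311381372935989344256*M^7 + 347274419924224411136*M^8 + 322762519598464143360*M^9 + 252175286104674828288*M^10 + 166584407794120572928*M^11 + 93352219950007492608*M^12 + 44430113946428571648*M^13 + 17942842906580418560*M^14 + 6129495592345796608*M^15 + 1761503379865468928*M^16 + 422283136436011008*M^17 + 83421775567781888*M^18 + 13345152355532800*M^19 + 1685504089128960*M^20 + 161762938716160*M^21 + 11085377699840*M^22 + 483183820800*M^23 + 10066329600*M^24 := by linarith [pow_nonneg hM 2, pow_nonneg hM 3, pow_nonneg hM 4, pow_nonneg hM 5, pow_nonneg hM 6, pow_nonneg hM 7, pow_nonneg hM 8, pow_nonneg hM 9, pow_nonneg hM 10, pow_nonneg hM 11, pow_nonneg hM 12,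 pow_nonneg hM 13, pow_nonneg hM 14, pow_nonneg hM 15, pow_nonneg hM 16, pow_nonneg hM 17, pow_nonneg hM 18, pow_nonneg hM 19, pow_nonneg hM 20, pow_nonneg hM 21, pow_nonneg hM 22, pow_nonneg hM 23, pow_nonneg hM 24]
  have hQ : (0:ℝ) < 15^2*(2*(1+M)+1)^14*(2*(1+M)+3)^14 := by
    have q1 := pow_pos p1 14
    have q2 := pow_pos p2 14
    have q3 := pow_pos p3 14
    have q4 := pow_pos p1 7
    have q5 := pow_pos p2 7
    have q6 := pow_pos p3 7
    have q7 := pow_pos p2 5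
    have q8 := pow_pos p2 10
    positivity
  linarith [key, div_pos hP hQ]

theorem stmt18 (n : ℕ) (hn : 1 ≤ n) :
    ((2 * n + 3 : ℝ) / (2 * n + 1) <
      ((n + 2 : ℝ) / (n + 1)) *
        ((1 + 1 / (n + 1 : ℝ)) ^ (n + 1) / (1 + 1 / (n : ℝ)) ^ n)) ∧
    (((n + 2 : ℝ) / (n + 1)) *
        ((1 + 1 / (n + 1 : ℝ)) ^ (n + 1) / (1 + 1 / (n : ℝ)) ^ n) <
      Real.log (1 + 1 / (n : ℝ)) / Real.log (1 + 1 / (n + 1 : ℝ))) ∧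
    (Real.log (1 + 1 / (n : ℝ)) / Real.log (1 + 1 / (n + 1 : ℝ)) <
      Real.sqrt ((n + 2 : ℝ) / n)) ∧
    (Real.sqrt ((n + 2 : ℝ) / n) <
      (n + 2 : ℝ) * (2 * n + 1) / (n * (2 * n + 3))) := by
  have hN : (1:ℝ) ≤ (n:ℝ) := by exact_mod_cast hn
  set N := (n:ℝ) with hNdef
  have hN0 : (0:ℝ) < N := by linarith
  have hu0 : (0:ℝ) < 1/(2*N+1) := by positivity
  have hv0 : (0:ℝ) < 1/(2*N+3) := by positivity
  have hw0 : (0:ℝ) < 1/(2*N+2) := by positivity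
  have hu3 : 1/(2*N+1) ≤ 1/3 := by rw [div_le_div_iff₀ (by linarith) (by norm_num)]; linarith
  have hv3 : 1/(2*N+3) ≤ 1/3 := by rw [div_le_div_iff₀ (by linarith) (by norm_num)]; linarith
  have hw3 : 1/(2*N+2) ≤ 1/3 := by rw [div_le_div_iff₀ (by linarith) (by norm_num)]; linarith
  have hw4 : 1/(2*N+2) ≤ 1/4 := by rw [div_le_div_iff₀ (by linarith) (by norm_num)]; linarith
  obtain ⟨haL, haU⟩ := log_bounds hu0 hu3
  obtain ⟨hbL, hbU⟩ := log_bounds hv0 hv3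
  obtain ⟨hcL, hcU⟩ := log_bounds hw0 hw3
  have hNe : N ≠ 0 := ne_of_gt hN0
  have hN1e : (N+1) ≠ 0 := by intro h; linarith [hN0]
  have hue : (1:ℝ) - 1/(2*N+1) ≠ 0 := by intro h; linarith [hu3]
  have hve : (1:ℝ) - 1/(2*N+3) ≠ 0 := by intro h; linarith [hv3]
  have hwe : (1:ℝ) - 1/(2*N+2) ≠ 0 := by intro h; linarith [hw3]
  have h1e : (2*N+1) ≠ 0 := by intro h; linarith
  have h2e : (2*N+2) ≠ 0 := by intro h; linarith
  have h3e : (2*N+3) ≠ 0 := by intro h; linarith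
  have hua : (1 + 1/(2*N+1))/(1 - 1/(2*N+1)) = 1 + 1/N := by
    rw [div_eq_iff hue]; field_simp; ring
  have hvb : (1 + 1/(2*N+3))/(1 - 1/(2*N+3)) = 1 + 1/(N+1) := by
    rw [div_eq_iff hve]; field_simp; ring
  have hwc : (1 + 1/(2*N+2))/(1 - 1/(2*N+2)) = (2*N+3)/(2*N+1) := by
    rw [div_eq_iff hwe]; field_simp; ring
  rw [hua] at haL haU
  rw [hvb] at hbL hbU
  rw [hwc] at hcL hcU
  set a := Real.log (1 + 1/N) with ha_def
  set b := Real.log (1 + 1/(N+1)) with hb_def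
  have ha0 : 0 < a := Real.log_pos (by
    have : (0:ℝ) < 1/N := by positivity
    linarith)
  have hb0 : 0 < b := Real.log_pos (by
    have : (0:ℝ) < 1/(N+1) := by positivity
    linarith)
  have hflu : 0 < fl (1/(2*N+1)) := fl_pos hu0 hu3
  have hflv : 0 < fl (1/(2*N+3)) := fl_pos hv0 hv3
  have hguv : 0 < gu (1/(2*N+3)) := lt_of_lt_of_le (lt_of_lt_of_le hflv (by simp only [fl, gu]; nlinarith [pow_pos hv0 7])) (le_refl _)
  -- Middle expression
  have hbase1 : (0:ℝ) < 1 + 1/(N+1) := by positivity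
  have hbase2 : (0:ℝ) < 1 + 1/N := by positivity
  have hMid0 : (0:ℝ) < ((N + 2) / (N + 1)) * ((1 + 1 / (N + 1)) ^ (n + 1) / (1 + 1 / N) ^ n) := by
    apply mul_pos (div_pos (by linarith) (by linarith))
    exact div_pos (pow_pos hbase1 (n+1)) (pow_pos hbase2 n)
  have hfrac : (N + 2) / (N + 1) = 1 + 1/(N+1) := by
    field_simp
    ring
  have hlogMid : Real.log (((N + 2) / (N + 1)) * ((1 + 1 / (N + 1)) ^ (n + 1) / (1 + 1 / N) ^ n))
      = (N+2)*b - N*a := by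
    rw [Real.log_mul (by positivity) (ne_of_gt (div_pos (pow_pos hbase1 (n+1)) (pow_pos hbase2 n))),
        Real.log_div (ne_of_gt (pow_pos hbase1 (n+1))) (ne_of_gt (pow_pos hbase2 n)),
        Real.log_pow, Real.log_pow, hfrac, ← ha_def, ← hb_def]
    push_cast
    ring
  -- E bounds
  have hE_lb : (N+2)*fl (1/(2*N+3)) - N*gu (1/(2*N+1)) ≤ (N+2)*b - N*a := by
    have h1 : (N+2)*fl (1/(2*N+3)) ≤ (N+2)*b := mul_le_mul_of_nonneg_left hbL (by linarith)
    have h2 : N*a ≤ N*gu (1/(2*N+1)) := mul_le_mul_of_nonneg_left haU hN0.le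
    linarith
  have hE_ub : (N+2)*b - N*a ≤ (N+2)*gu (1/(2*N+3)) - N*fl (1/(2*N+1)) := by
    have h1 : (N+2)*b ≤ (N+2)*gu (1/(2*N+3)) := mul_le_mul_of_nonneg_left hbU (by linarith)
    have h2 : N*fl (1/(2*N+1)) ≤ N*a := mul_le_mul_of_nonneg_left haL hN0.le
    linarith
  -- C1
  have hC1 : (2*N + 3) / (2*N + 1) < ((N + 2) / (N + 1)) * ((1 + 1 / (N + 1)) ^ (n + 1) / (1 + 1 / N) ^ n) := by
    have hlt : Real.log ((2*N+3)/(2*N+1)) < Real.log (((N + 2) / (N + 1)) * ((1 + 1 / (N + 1)) ^ (n + 1) / (1 + 1 / N) ^ n)) := by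
      rw [hlogMid]
      have := ineq1 N hN
      linarith
    exact (Real.log_lt_log_iff (by positivity) hMid0).1 hlt
  -- C2
  have hEbar0 : 0 < eb (1/(2*N+2)) := by
    simp only [eb]
    nlinarith [pow_pos hw0 3, pow_pos hw0 5]
  have hEbar1 : eb (1/(2*N+2)) ≤ 1 := by
    simp only [eb]
    have h3 : (1/(2*N+2))^3 ≤ (1/4:ℝ)^3 := pow_le_pow_left₀ hw0.le hw4 3
    have h5 : (1/(2*N+2))^5 ≤ (1/4:ℝ)^5 := pow_le_pow_left₀ hw0.le hw4 5
    nlinarith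
  have hC2 : ((N + 2) / (N + 1)) * ((1 + 1 / (N + 1)) ^ (n + 1) / (1 + 1 / N) ^ n) < a / b := by
    have h2a := ineq2a N hN
    have h2b := ineq2b N hN
    have hEb4 : (0:ℝ) < 4 - eb (1/(2*N+2)) := by linarith
    have hEb4' : (0:ℝ) < 4 + eb (1/(2*N+2)) := by linarith
    calc ((N + 2) / (N + 1)) * ((1 + 1 / (N + 1)) ^ (n + 1) / (1 + 1 / N) ^ n)
        = Real.exp ((N+2)*b - N*a) := by rw [← hlogMid, Real.exp_log hMid0]
      _ ≤ Real.exp (eb (1/(2*N+2))) := Real.exp_le_exp.2 (by linarith)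
      _ < ((4 + eb (1/(2*N+2)))/(4 - eb (1/(2*N+2))))^2 := exp_lt_sq hEbar0 hEbar1
      _ = (4 + eb (1/(2*N+2)))^2/(4 - eb (1/(2*N+2)))^2 := div_pow _ _ 2
      _ < fl (1/(2*N+1)) / gu (1/(2*N+3)) := by
          rw [div_lt_div_iff₀ (pow_pos hEb4 2) hguv]
          linarith
      _ ≤ a / b := div_le_div₀ ha0.le haL hb0 hbU
  -- C3
  have hC3 : a / b < Real.sqrt ((N+2)/N) := by
    rw [Real.lt_sqrt (div_nonneg ha0.le hb0.le), div_pow, div_lt_div_iff₀ (pow_pos hb0 2) hN0]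
    have h3 := ineq3 N hN
    have ha2 : a^2 ≤ (gu (1/(2*N+1)))^2 := pow_le_pow_left₀ ha0.le haU 2
    have hb2 : (fl (1/(2*N+3)))^2 ≤ b^2 := pow_le_pow_left₀ hflv.le hbL 2
    have k1 : a^2 * N ≤ (gu (1/(2*N+1)))^2 * N := mul_le_mul_of_nonneg_right ha2 hN0.le
    have k2 : (N+2)*(fl (1/(2*N+3)))^2 ≤ (N+2)*b^2 := mul_le_mul_of_nonneg_left hb2 (by linarith)
    nlinarith
  -- C4
  have h2N3 : (0:ℝ) < 2*N+3 := by linarith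
  have hq : (0:ℝ) < (N+2)*(2*N+1)/(N*(2*N+3)) := by
    apply div_pos (mul_pos (by linarith) (by linarith)) (mul_pos hN0 h2N3)
  have hC4 : Real.sqrt ((N+2)/N) < (N+2)*(2*N+1)/(N*(2*N+3)) := by
    rw [Real.sqrt_lt' hq, div_pow, div_lt_div_iff₀ hN0 (pow_pos (mul_pos hN0 h2N3) 2)]
    nlinarith [mul_pos hN0 (show (0:ℝ) < N+2 by linarith), sq_nonneg N, hN0, mul_pos (mul_pos hN0 hN0) hN0]
  exact ⟨by exact_mod_cast hC1, by exact_mod_cast hC2, by exact_mod_cast hC3, by exact_mod_cast hC4⟩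
end

section
/- Let n ≥ 1 and x_1, …, x_n ∈ (0, 1/2], not all equal. Let A_n, G_n be the arithmetic and geometric means of the x_i, and A'_n, G'_n the arithmetic and geometric means of 1 - x_1, …, 1 - x_n. Then (A'_n/G'_n)^{A'_n + G'_n} < (A_n/G_n)^{A_n + G_n} and (A'_n/G'_n)^{A_n - G_n} < (A_n/G_n)^{A'_n - G'_n}. -/
/-!
Averaging `y - c - c (log y - log c)` over the `x i` gives `A - c - c (log G - log c)`. This
quantity dominates `(y - c)²` when `y, c ∈ (0, 1/2]` and is dominated by it when `y, c ≥ 1/2`.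
With `c = G` this gives the Cartwright–Field bound `Var x ≤ A - G`; with `c = A'` applied to
`1 - x` it gives `A' log (A'/G') ≤ Var (1 - x) = Var x`. Hence
`(A' + G') log (A'/G') ≤ 2 A' log (A'/G') ≤ 2 (A - G) < (A + G) log (A/G)`, the last step being
the inequality between the logarithmic and arithmetic means. The second inequality follows from
`log (A'/G') ≤ (A' - G')/G'`, `(A - G)/A ≤ log (A/G)` and `A < 1/2 ≤ G'`.
-/

open Real Finset Set

theorem two_mul_sub_lt_add_mul_log_div {a b : ℝ} (hb : 0 < b) (hba : b < a) :
    2 * (a - b) < (a + b) * log (a / b) := by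
  have hab : 0 < a + b := by linarith
  have hab' : a - b ≠ 0 := (sub_pos.2 hba).ne'
  have ht : 0 < (a - b) / (a + b) := div_pos (sub_pos.2 hba) hab
  -- `log (a / b) = ∑ₖ 2 t ^ (2k+1) / (2k+1)` with `t = (a - b) / (a + b)`; keep two terms.
  have hsum := hasSum_log_one_add_inv (div_pos hb (sub_pos.2 hba))
  rw [show 1 / (2 * (b / (a - b)) + 1) = (a - b) / (a + b) by
      rw [show 2 * (b / (a - b)) + 1 = (a + b) / (a - b) by field_simp; ring, one_div_div],
    show 1 + (b / (a - b))⁻¹ = a / b by rw [inv_div]; field_simp; ring] at hsum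
  have htwo := sum_le_hasSum (range 2) (fun k _ => by positivity) hsum
  norm_num [sum_range_succ] at htwo
  have key : 2 * (a - b) / (a + b) < log (a / b) := by
    rw [mul_div_assoc]; nlinarith [pow_pos ht 3]
  rwa [div_lt_iff₀' hab] at key

theorem hasDerivAt_sub_mul_log_sub_sq (c : ℝ) {y : ℝ} (hy : 0 < y) :
    HasDerivAt (fun y => y - c * log y - (y - c) ^ 2) ((y - c) * (1 - 2 * y) / y) y := by
  have h : HasDerivAt (fun y => y - c * log y - (y - c) ^ 2) (1 - c * y⁻¹ - 2 * (y - c)) y := by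
    simpa using ((hasDerivAt_id' y).fun_sub ((hasDerivAt_log hy.ne').const_mul c)).fun_sub
      (((hasDerivAt_id' y).sub_const c).fun_pow 2)
  convert h using 1
  field_simp

theorem sq_sub_le_sub_sub_mul_log_sub {c y : ℝ} (hc0 : 0 < c) (hc : c ≤ 1 / 2) (hy0 : 0 < y)
    (hy : y ≤ 1 / 2) : (y - c) ^ 2 ≤ y - c - c * (log y - log c) := by
  have hd := fun y (hy : 0 < y) => hasDerivAt_sub_mul_log_sub_sq c hy
  have hmin : IsMinOn (fun y => y - c * log y - (y - c) ^ 2) (Ioc 0 (1 / 2)) c := by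
    apply isMinOn_Ioc_of_deriv (hd c hc0).continuousAt (hd _ (by norm_num)).continuousAt
    · exact fun y hy => (hd y hy.1).differentiableAt.differentiableWithinAt
    · exact fun y hy => (hd y (hc0.trans hy.1)).differentiableAt.differentiableWithinAt
    · intro y hy
      rw [(hd y hy.1).deriv]
      exact div_nonpos_of_nonpos_of_nonneg
        (mul_nonpos_of_nonpos_of_nonneg (by linarith [hy.2]) (by linarith [hy.2])) hy.1.le
    · intro y hy
      rw [(hd y (hc0.trans hy.1)).deriv]
      exact div_nonneg (mul_nonneg (by linarith [hy.1]) (by linarith [hy.2])) (by linarith [hy.1])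
  have := hmin ⟨hy0, hy⟩
  simp only [mem_ofPred_eq, sub_self] at this
  linarith

theorem sub_sub_mul_log_sub_le_sq {c y : ℝ} (hc : 1 / 2 ≤ c) (hy : 1 / 2 ≤ y) :
    y - c - c * (log y - log c) ≤ (y - c) ^ 2 := by
  have hd := fun y (hy : 0 < y) => (hasDerivAt_sub_mul_log_sub_sq c hy).neg
  have hmin : IsMinOn (fun y => -(y - c * log y - (y - c) ^ 2)) (Ici (1 / 2)) c := by
    apply isMinOn_Ici_of_deriv (hd _ (by norm_num)).continuousAt
      (hd c (by linarith)).continuousAt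
    · exact fun y hy => (hd y (by linarith [hy.1])).differentiableAt.differentiableWithinAt
    · exact fun y hy => (hd y (by linarith [mem_Ioi.1 hy])).differentiableAt.differentiableWithinAt
    · intro y hy
      rw [(hd y (by linarith [hy.1])).deriv, neg_nonpos]
      exact div_nonneg (mul_nonneg_of_nonpos_of_nonpos (by linarith [hy.2]) (by linarith [hy.1]))
        (by linarith [hy.1])
    · intro y hy
      have hy : c < y := hy
      rw [(hd y (by linarith)).deriv, neg_nonneg]
      exact div_nonpos_of_nonpos_of_nonneg
        (mul_nonpos_of_nonneg_of_nonpos (by linarith) (by linarith)) (by linarith)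
  have := hmin (mem_Ici.2 hy)
  simp only [mem_ofPred_eq, sub_self] at this
  linarith

noncomputable section

variable {ι : Type*} [Fintype ι]

def arithMean (x : ι → ℝ) : ℝ := (∑ i, x i) / Fintype.card ι

def geomMean (x : ι → ℝ) : ℝ := (∏ i, x i) ^ ((1 : ℝ) / Fintype.card ι)

def popVariance (x : ι → ℝ) : ℝ := (∑ i, (x i - arithMean x) ^ 2) / Fintype.card ι

theorem sum_eq_card_mul_arithMean [Nonempty ι] (x : ι → ℝ) :
    ∑ i, x i = Fintype.card ι * arithMean x := by
  rw [arithMean, mul_div_cancel₀ _ (by positivity)]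

theorem sum_sub_arithMean [Nonempty ι] (x : ι → ℝ) : ∑ i, (x i - arithMean x) = 0 := by
  rw [sum_sub_distrib, sum_const, card_univ, nsmul_eq_mul, sum_eq_card_mul_arithMean, sub_self]

theorem arithMean_one_sub [Nonempty ι] (x : ι → ℝ) :
    arithMean (fun i => 1 - x i) = 1 - arithMean x := by
  rw [arithMean, sum_sub_distrib, sum_const, card_univ, nsmul_one, sum_eq_card_mul_arithMean,
    ← mul_one_sub, mul_div_cancel_left₀ _ (by positivity)]

theorem popVariance_one_sub [Nonempty ι] (x : ι → ℝ) :
    popVariance (fun i => 1 - x i) = popVariance x := by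
  simp only [popVariance, arithMean_one_sub]
  congr 1
  exact sum_congr rfl fun i _ => by ring

theorem sum_sq_sub_arithMean_le [Nonempty ι] (x : ι → ℝ) (c : ℝ) :
    ∑ i, (x i - arithMean x) ^ 2 ≤ ∑ i, (x i - c) ^ 2 := by
  have h : ∑ i, (x i - c) ^ 2 = ∑ i, (x i - arithMean x) ^ 2
      + 2 * (arithMean x - c) * ∑ i, (x i - arithMean x)
      + Fintype.card ι * (arithMean x - c) ^ 2 := by
    rw [mul_sum, ← sum_add_distrib, ← nsmul_eq_mul, ← card_univ, ← sum_const,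
      ← sum_add_distrib]
    exact sum_congr rfl fun i _ => by ring
  rw [h, sum_sub_arithMean]
  nlinarith [sq_nonneg (arithMean x - c)]

theorem geomMean_pos {x : ι → ℝ} (hx : ∀ i, 0 < x i) : 0 < geomMean x :=
  rpow_pos_of_pos (prod_pos fun i _ => hx i) _

theorem geomMean_mono {x y : ι → ℝ} (hx : ∀ i, 0 ≤ x i) (hxy : ∀ i, x i ≤ y i) :
    geomMean x ≤ geomMean y :=
  rpow_le_rpow (prod_nonneg fun i _ => hx i) (prod_le_prod (fun i _ => hx i) fun i _ => hxy i)
    (by positivity)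

theorem geomMean_const [Nonempty ι] {b : ℝ} (hb : 0 ≤ b) : geomMean (fun _ : ι => b) = b := by
  rw [geomMean, prod_const, card_univ, ← rpow_natCast, ← rpow_mul hb,
    mul_one_div_cancel (by positivity), rpow_one]

theorem sum_log_eq_card_mul_log_geomMean {x : ι → ℝ} (hx : ∀ i, 0 < x i) :
    ∑ i, log (x i) = Fintype.card ι * log (geomMean x) := by
  rw [geomMean, log_rpow (prod_pos fun i _ => hx i), log_prod fun i _ => (hx i).ne']
  rcases isEmpty_or_nonempty ι with hι | hι
  · simp
  · rw [← mul_assoc, mul_one_div_cancel (by positivity), one_mul]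

theorem geomMean_lt_arithMean {x : ι → ℝ} (hx : ∀ i, 0 < x i) (hne : ∃ i j, x i ≠ x j) :
    geomMean x < arithMean x := by
  obtain ⟨i, j, hij⟩ := hne
  have : Nonempty ι := ⟨i⟩
  have hw : ∑ _i : ι, (1 : ℝ) / Fintype.card ι = 1 := by
    rw [sum_const, card_univ, nsmul_eq_mul, mul_one_div_cancel (by positivity)]
  have h := (geom_mean_lt_arith_mean_weighted_iff_of_pos univ (fun _ => 1 / Fintype.card ι) x
    (fun _ _ => by positivity) hw fun i _ => (hx i).le).2 ⟨i, mem_univ _, j, mem_univ _, hij⟩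
  rwa [finsetProd_rpow _ _ fun i _ => (hx i).le, ← mul_sum, one_div_mul_eq_div] at h

theorem sum_sub_sub_mul_log_sub [Nonempty ι] {x : ι → ℝ} (hx : ∀ i, 0 < x i) (c : ℝ) :
    ∑ i, (x i - c - c * (log (x i) - log c)) =
      Fintype.card ι * (arithMean x - c - c * (log (geomMean x) - log c)) := by
  simp only [sum_sub_distrib, ← mul_sum, sum_const, card_univ, nsmul_eq_mul,
    sum_eq_card_mul_arithMean, sum_log_eq_card_mul_log_geomMean hx]
  ring

theorem popVariance_le_arithMean_sub_geomMean [Nonempty ι] {x : ι → ℝ}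
    (hx : ∀ i, 0 < x i ∧ x i ≤ 1 / 2) :
    popVariance x ≤ arithMean x - geomMean x := by
  have hG : 0 < geomMean x := geomMean_pos fun i => (hx i).1
  have hG' : geomMean x ≤ 1 / 2 :=
    (geomMean_mono (fun i => (hx i).1.le) fun i => (hx i).2).trans_eq (geomMean_const (by norm_num))
  have key : ∑ i, (x i - arithMean x) ^ 2 ≤ Fintype.card ι * (arithMean x - geomMean x) :=
    calc ∑ i, (x i - arithMean x) ^ 2
      _ ≤ ∑ i, (x i - geomMean x) ^ 2 := sum_sq_sub_arithMean_le x _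
      _ ≤ ∑ i, (x i - geomMean x - geomMean x * (log (x i) - log (geomMean x))) :=
        sum_le_sum fun i _ => sq_sub_le_sub_sub_mul_log_sub hG hG' (hx i).1 (hx i).2
      _ = Fintype.card ι * (arithMean x - geomMean x) := by
        rw [sum_sub_sub_mul_log_sub (fun i => (hx i).1)]; ring
  rwa [popVariance, div_le_iff₀' (by positivity)]

theorem mul_log_arithMean_div_geomMean_le_popVariance [Nonempty ι] {x : ι → ℝ}
    (hx : ∀ i, 1 / 2 ≤ x i) :
    arithMean x * log (arithMean x / geomMean x) ≤ popVariance x := by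
  have hx0 : ∀ i, 0 < x i := fun i => by linarith [hx i]
  have hA : 1 / 2 ≤ arithMean x := by
    rw [arithMean, le_div_iff₀ (by positivity), mul_comm, ← nsmul_eq_mul, ← card_univ,
      ← sum_const]
    exact sum_le_sum fun i _ => hx i
  have key : Fintype.card ι * (arithMean x * log (arithMean x / geomMean x)) ≤
      ∑ i, (x i - arithMean x) ^ 2 :=
    calc Fintype.card ι * (arithMean x * log (arithMean x / geomMean x))
      _ = ∑ i, (x i - arithMean x - arithMean x * (log (x i) - log (arithMean x))) := by
        rw [sum_sub_sub_mul_log_sub hx0, log_div (by linarith) (geomMean_pos hx0).ne']; ring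
      _ ≤ ∑ i, (x i - arithMean x) ^ 2 :=
        sum_le_sum fun i _ => sub_sub_mul_log_sub_le_sq hA (hx i)
  rwa [popVariance, le_div_iff₀' (by positivity)]

theorem rpow_lt_rpow_iff_mul_log_lt {a b p q : ℝ} (ha : 0 < a) (hb : 0 < b) :
    a ^ p < b ^ q ↔ p * log a < q * log b := by
  rw [rpow_def_of_pos ha, rpow_def_of_pos hb, exp_lt_exp, mul_comm p, mul_comm q]

theorem div_rpow_add_lt_div_rpow_add {a g a' g' : ℝ} (hg : 0 < g) (hga : g < a) (hg' : 0 < g')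
    (hga' : g' ≤ a') (h : a' * log (a' / g') ≤ a - g) :
    (a' / g') ^ (a' + g') < (a / g) ^ (a + g) := by
  rw [rpow_lt_rpow_iff_mul_log_lt (div_pos (hg'.trans_le hga') hg') (div_pos (hg.trans hga) hg)]
  have hlog : 0 ≤ log (a' / g') := log_nonneg ((one_le_div hg').2 hga')
  calc (a' + g') * log (a' / g')
    _ ≤ 2 * (a' * log (a' / g')) := by nlinarith
    _ ≤ 2 * (a - g) := by linarith
    _ < (a + g) * log (a / g) := two_mul_sub_lt_add_mul_log_div hg hga

theorem div_rpow_sub_lt_div_rpow_sub {a g a' g' : ℝ} (hg : 0 < g) (hga : g < a) (hag' : a < g')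
    (hga' : g' < a') :
    (a' / g') ^ (a - g) < (a / g) ^ (a' - g') := by
  have hg' : 0 < g' := by linarith
  rw [rpow_lt_rpow_iff_mul_log_lt (div_pos (hg'.trans hga') hg') (div_pos (hg.trans hga) hg)]
  have hupper : log (a' / g') ≤ (a' - g') / g' := by
    have := log_le_sub_one_of_pos (div_pos (hg'.trans hga') hg')
    rwa [div_sub_one hg'.ne'] at this
  have hlower : (a - g) / a ≤ log (a / g) := by
    have := one_sub_inv_le_log_of_pos (div_pos (hg.trans hga) hg)
    rwa [inv_div, one_sub_div (hg.trans hga).ne'] at this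
  have hprod : 0 < (a - g) * (a' - g') := mul_pos (by linarith) (by linarith)
  calc (a - g) * log (a' / g')
    _ ≤ (a - g) * ((a' - g') / g') := mul_le_mul_of_nonneg_left hupper (by linarith)
    _ = (a - g) * (a' - g') / g' := by ring
    _ < (a - g) * (a' - g') / a := div_lt_div_of_pos_left hprod (hg.trans hga) hag'
    _ = (a' - g') * ((a - g) / a) := by ring
    _ ≤ (a' - g') * log (a / g) := mul_le_mul_of_nonneg_left hlower (by linarith)

end

theorem stmt19_general (n : ℕ) (x : Fin n → ℝ)
    (hx : ∀ i, x i ∈ Set.Ioc (0 : ℝ) (1 / 2))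
    (hne : ¬∀ i j, x i = x j) :
    let A := (∑ i, x i) / n
    let G := (∏ i, x i) ^ ((1 : ℝ) / n)
    let A' := (∑ i, (1 - x i)) / n
    let G' := (∏ i, (1 - x i)) ^ ((1 : ℝ) / n)
    (A' / G') ^ (A' + G') < (A / G) ^ (A + G) ∧
    (A' / G') ^ (A - G) < (A / G) ^ (A' - G') := by
  intro A G A' G'
  obtain ⟨i, j, hij⟩ : ∃ i j, x i ≠ x j := by simpa using hne
  have : Nonempty (Fin n) := ⟨i⟩
  set z : Fin n → ℝ := fun i => 1 - x i with hz
  have hA : A = arithMean x := by simp [A, arithMean]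
  have hG : G = geomMean x := by simp [G, geomMean]
  have hA' : A' = 1 - A := by rw [hA, ← arithMean_one_sub]; simp [A', arithMean]
  have hG' : G' = geomMean z := by simp [G', geomMean, z]
  have hx0 : ∀ i, 0 < x i := fun i => (hx i).1
  have hz2 : ∀ i, 1 / 2 ≤ z i := fun i => by simp only [hz]; linarith [(hx i).2]
  have hG0 : 0 < G := hG ▸ geomMean_pos hx0
  have hGA : G < A := hA ▸ hG ▸ geomMean_lt_arithMean hx0 ⟨i, j, hij⟩
  have hG'A' : G' < A' := by
    rw [hA', hA, ← arithMean_one_sub, hG']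
    exact geomMean_lt_arithMean (fun i => by linarith [hz2 i]) ⟨i, j, by simpa [z] using hij⟩
  have hG'half : 1 / 2 ≤ G' :=
    hG' ▸ (geomMean_const (by norm_num)).symm.trans_le (geomMean_mono (by norm_num) hz2)
  have hvar : A' * log (A' / G') ≤ A - G := by
    have h := mul_log_arithMean_div_geomMean_le_popVariance hz2
    rw [popVariance_one_sub, arithMean_one_sub, ← hA, ← hA', ← hG'] at h
    exact h.trans (hA ▸ hG ▸ popVariance_le_arithMean_sub_geomMean hx)
  exact ⟨div_rpow_add_lt_div_rpow_add hG0 hGA (by linarith) hG'A'.le hvar,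
    div_rpow_sub_lt_div_rpow_sub hG0 hGA (by linarith) hG'A'⟩

theorem stmt19 (n : ℕ) (hn : 1 ≤ n) (x : Fin n → ℝ)
    (hx : ∀ i, x i ∈ Set.Ioc (0 : ℝ) (1 / 2))
    (hne : ¬∀ i j, x i = x j) :
    let A := (∑ i, x i) / n
    let G := (∏ i, x i) ^ ((1 : ℝ) / n)
    let A' := (∑ i, (1 - x i)) / n
    let G' := (∏ i, (1 - x i)) ^ ((1 : ℝ) / n)
    (A' / G') ^ (A' + G') < (A / G) ^ (A + G) ∧
    (A' / G') ^ (A - G) < (A / G) ^ (A' - G') :=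
  stmt19_general n x hx hne
end
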